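/- arXiv:2511.19678 — 5 statements merged into one kernel-verified Lean document; each statement's English description precedes it below -/
import Mathlib

section
/- For every word w with at least two distinct letters and every positive integer d, one has 3^{d−1}·C_1(w) ≤ C_d(w) ≤ ((3^d − 1)/2)·C_1(w). -/
open scoped BigOperators

namespace WordGrid

variable {α : Type*}

/-- A valid word-search direction in dimension `d`: a nonzero vector with
entries in `{-1, 0, 1}`. -/
def IsDir (d : ℕ) (v : Fin d → ℤ) : Prop :=
  (∀ i, v i = -1 ∨ v i = 0 ∨ v i = 1) ∧ v ≠ 0

/-- `(p, v)` is an appearance of the word `w` in the grid `Γ` of shape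
`ZMod (n 0) × ⋯ × ZMod (n (d-1))`: reading from `p` in direction `v`
(reduced coordinatewise into the shape group) spells out `w`. -/
def Appears {d : ℕ} (n : Fin d → ℕ) (Γ : (∀ i, ZMod (n i)) → α) (w : List α)
    (p : ∀ i, ZMod (n i)) (v : Fin d → ℤ) : Prop :=
  IsDir d v ∧
    ∀ k : Fin w.length, Γ (fun j => p j + (((k : ℤ) * v j : ℤ) : ZMod (n j))) = w.get k

/-- The number of appearances of the word `w` in the grid `Γ`. -/
noncomputable def count {d : ℕ} (n : Fin d → ℕ) (Γ : (∀ i, ZMod (n i)) → α)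
    (w : List α) : ℕ :=
  Set.ncard {pv : (∀ i, ZMod (n i)) × (Fin d → ℤ) | Appears n Γ w pv.1 pv.2}

/-- The concentration of the word `w` in the grid `Γ`: the number of
appearances divided by the size of the grid. -/
noncomputable def conc {d : ℕ} (n : Fin d → ℕ) (Γ : (∀ i, ZMod (n i)) → α)
    (w : List α) : ℝ :=
  (count n Γ w : ℝ) / ((∏ i, n i : ℕ) : ℝ)

/-- `C d w`: the supremum of the concentration of `w` over all `d`-dimensional
grids (of all shapes with every side length positive). -/
noncomputable def C (d : ℕ) (w : List α) : ℝ :=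
  sSup {x : ℝ | ∃ (n : Fin d → ℕ) (Γ : (∀ i, ZMod (n i)) → α),
    (∀ i, 0 < n i) ∧ x = conc n Γ w}

/-- The word `w` contains at least two distinct letters. -/
def TwoLetters (w : List α) : Prop := ∃ x ∈ w, ∃ y ∈ w, x ≠ y



def Dirs (d : ℕ) : Finset (Fin d → ℤ) :=
  (Fintype.piFinset fun _ => ({-1, 0, 1} : Finset ℤ)).erase 0

lemma mem_Dirs {d : ℕ} {v : Fin d → ℤ} : v ∈ Dirs d ↔ IsDir d v := by
  simp [Dirs, IsDir, Fintype.mem_piFinset, and_comm]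

lemma card_Dirs (d : ℕ) : (Dirs d).card = 3 ^ d - 1 := by
  rw [Dirs, Finset.card_erase_of_mem, Fintype.card_piFinset]
  · simp
  · simp [Fintype.mem_piFinset]

lemma app_finite {d : ℕ} (n : Fin d → ℕ) (hn : ∀ i, 0 < n i) (Γ : (∀ i, ZMod (n i)) → α)
    (w : List α) : {pv : (∀ i, ZMod (n i)) × (Fin d → ℤ) | Appears n Γ w pv.1 pv.2}.Finite := by
  haveI : ∀ i, NeZero (n i) := fun i => ⟨(hn i).ne'⟩
  have hfin : ({-1, 0, 1} : Set ℤ).Finite := (Set.finite_singleton 1).insert 0 |>.insert (-1)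
  apply Set.Finite.subset (Set.Finite.prod Set.finite_univ
    (Set.Finite.pi (fun _ : Fin d => hfin)))
  rintro ⟨p, v⟩ ⟨⟨hv, -⟩, -⟩
  refine ⟨Set.mem_univ _, fun i _ => ?_⟩
  simpa using hv i

lemma count_eq_nat_card {d : ℕ} (n : Fin d → ℕ) (Γ : (∀ i, ZMod (n i)) → α) (w : List α) :
    count n Γ w = Nat.card {pv : (∀ i, ZMod (n i)) × (Fin d → ℤ) // Appears n Γ w pv.1 pv.2} := by
  rw [count, ← Nat.card_coe_set_eq]
  rfl

lemma count_le {d : ℕ} (n : Fin d → ℕ) (hn : ∀ i, 0 < n i) (Γ : (∀ i, ZMod (n i)) → α)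
    (w : List α) : count n Γ w ≤ (∏ i, n i) * 3 ^ d := by
  haveI : ∀ i, NeZero (n i) := fun i => ⟨(hn i).ne'⟩
  rw [count_eq_nat_card]
  set e : ℤ → Fin 3 := fun t => if t = -1 then 0 else if t = 0 then 1 else 2 with he
  have hinj : Function.Injective
      (fun x : {pv : (∀ i, ZMod (n i)) × (Fin d → ℤ) // Appears n Γ w pv.1 pv.2} =>
        (x.1.1, fun i => e (x.1.2 i))) := by
    rintro ⟨⟨p, v⟩, h⟩ ⟨⟨p', v'⟩, h'⟩ hab
    have h1 : p = p' := congrArg Prod.fst hab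
    have h2 : ∀ i, e (v i) = e (v' i) := fun i => congrFun (congrArg Prod.snd hab) i
    have einj : ∀ a b : ℤ, (a = -1 ∨ a = 0 ∨ a = 1) → (b = -1 ∨ b = 0 ∨ b = 1) →
        e a = e b → a = b := by
      intro a b ha hb hab
      rcases ha with rfl | rfl | rfl <;> rcases hb with rfl | rfl | rfl <;> simp_all [he] <;>
        exact absurd hab (by decide)
    have hD : ∀ i, v i = -1 ∨ v i = 0 ∨ v i = 1 := h.1.1
    have hD' : ∀ i, v' i = -1 ∨ v' i = 0 ∨ v' i = 1 := h'.1.1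
    have h3 : v = v' := funext fun i => einj _ _ (hD i) (hD' i) (h2 i)
    subst h1; subst h3; rfl
  calc Nat.card _ ≤ Nat.card ((∀ i, ZMod (n i)) × (Fin d → Fin 3)) :=
        Nat.card_le_card_of_injective _ hinj
    _ = (∏ i, n i) * 3 ^ d := by
        simp [Nat.card_eq_fintype_card, Fintype.card_pi, ZMod.card, Fintype.card_fun]

lemma prod_cast_pos {d : ℕ} (n : Fin d → ℕ) (hn : ∀ i, 0 < n i) :
    (0 : ℝ) < ((∏ i, n i : ℕ) : ℝ) := by
  have : 0 < ∏ i, n i := Finset.prod_pos fun i _ => hn i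
  exact_mod_cast this

lemma bddAbove_concSet (d : ℕ) (w : List α) :
    BddAbove {x : ℝ | ∃ (n : Fin d → ℕ) (Γ : (∀ i, ZMod (n i)) → α),
      (∀ i, 0 < n i) ∧ x = conc n Γ w} := by
  refine ⟨3 ^ d, ?_⟩
  rintro x ⟨n, Γ, hn, rfl⟩
  have hP := prod_cast_pos n hn
  rw [conc, div_le_iff₀ hP]
  calc (count n Γ w : ℝ) ≤ (((∏ i, n i) * 3 ^ d : ℕ) : ℝ) := by
        exact_mod_cast count_le n hn Γ w
    _ = 3 ^ d * ((∏ i, n i : ℕ) : ℝ) := by push_cast; ring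

lemma concSet_nonempty (d : ℕ) (w : List α) (a : α) :
    Set.Nonempty {x : ℝ | ∃ (n : Fin d → ℕ) (Γ : (∀ i, ZMod (n i)) → α),
      (∀ i, 0 < n i) ∧ x = conc n Γ w} :=
  ⟨conc (fun _ => 1) (fun _ => a) w, fun _ => 1, fun _ => a, fun _ => one_pos, rfl⟩

lemma conc_le_C {d : ℕ} {n : Fin d → ℕ} (hn : ∀ i, 0 < n i) (Γ : (∀ i, ZMod (n i)) → α)
    (w : List α) : conc n Γ w ≤ C d w :=
  le_csSup (bddAbove_concSet d w) ⟨n, Γ, hn, rfl⟩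

lemma lower_aux {d : ℕ} (hd : 0 < d) (w : List α) (n1 : Fin 1 → ℕ) (hn1 : ∀ i, 0 < n1 i)
    (G : (∀ j : Fin 1, ZMod (n1 j)) → α) :
    (3 : ℝ) ^ (d - 1) * conc n1 G w ≤ C d w := by
  classical
  obtain ⟨e, rfl⟩ : ∃ e, d = e + 1 := ⟨d - 1, (Nat.succ_pred_eq_of_pos hd).symm⟩
  set i0 : Fin (e + 1) := ⟨0, hd⟩ with hi0
  set m := n1 0 with hm
  haveI : NeZero m := ⟨(hn1 0).ne'⟩
  haveI : ∀ j, NeZero (n1 j) := fun j => ⟨(hn1 j).ne'⟩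
  set n : Fin (e + 1) → ℕ := fun _ => m with hn
  have hnpos : ∀ i, 0 < n i := fun _ => hn1 0
  set eone : ZMod m → ∀ j : Fin 1, ZMod (n1 j) :=
    fun t j => Fin.cases t (fun i => i.elim0) j with heone
  set Γ : (∀ i : Fin (e + 1), ZMod (n i)) → α := fun x => G (eone (x i0)) with hΓ
  -- the domain of the injection
  set S := ({qu : (∀ j : Fin 1, ZMod (n1 j)) × (Fin 1 → ℤ) // Appears n1 G w qu.1 qu.2} ×
      ({i : Fin (e + 1) // i ≠ i0} → Fin 3) × ({i : Fin (e + 1) // i ≠ i0} → ZMod m)) with hS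
  set P : S → (∀ i : Fin (e + 1), ZMod (n i)) :=
    fun s i => if h : i = i0 then s.1.1.1 0 else s.2.2 ⟨i, h⟩ with hP
  set V : S → (Fin (e + 1) → ℤ) :=
    fun s i => if h : i = i0 then s.1.1.2 0 else ((s.2.1 ⟨i, h⟩ : ℕ) : ℤ) - 1 with hV
  have hPi0 : ∀ s : S, P s i0 = s.1.1.1 0 := fun s => dif_pos rfl
  have hVi0 : ∀ s : S, V s i0 = s.1.1.2 0 := fun s => dif_pos rfl
  have hApp : ∀ s : S, Appears n Γ w (P s) (V s) := by
    rintro ⟨⟨⟨q, u⟩, hqu⟩, g, r⟩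
    obtain ⟨⟨hu1, hu2⟩, hread⟩ := hqu
    constructor
    · constructor
      · intro i
        by_cases h : i = i0
        · subst h; rw [hV]; simp only [dif_pos rfl]; exact hu1 0
        · rw [hV]; simp only [dif_neg h]
          have h3 := (g ⟨i, h⟩).2
          omega
      · intro hzero
        apply hu2
        have h0 := congrFun hzero i0
        rw [hVi0] at h0
        funext j
        have hj : j = 0 := Subsingleton.elim j 0
        subst hj
        exact h0
    · intro k
      rw [hΓ]
      beta_reduce
      have hq := hread k
      rw [← hq]
      congr 1
      funext j
      have hj : j = 0 := Subsingleton.elim j 0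
      subst hj
      show eone (P _ i0 + (((k : ℤ) * V _ i0 : ℤ) : ZMod m)) 0 = _
      rw [hPi0, hVi0]
      rfl
  set Φ : S → {pv : (∀ i : Fin (e + 1), ZMod (n i)) × (Fin (e + 1) → ℤ) //
      Appears n Γ w pv.1 pv.2} := fun s => ⟨(P s, V s), hApp s⟩ with hΦ
  have hinj : Function.Injective Φ := by
    rintro a b hab
    simp only [hΦ, Subtype.mk.injEq, Prod.mk.injEq] at hab
    obtain ⟨h1, h2⟩ := hab
    obtain ⟨⟨⟨q, u⟩, hqu⟩, g, r⟩ := a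
    obtain ⟨⟨⟨q', u'⟩, hqu'⟩, g', r'⟩ := b
    refine Prod.ext ?_ (Prod.ext ?_ ?_)
    · apply Subtype.ext
      refine Prod.ext ?_ ?_
      · funext j
        have hj : j = 0 := Subsingleton.elim j 0
        subst hj
        have := congrFun h1 i0
        rwa [hPi0, hPi0] at this
      · funext j
        have hj : j = 0 := Subsingleton.elim j 0
        subst hj
        have := congrFun h2 i0
        rwa [hVi0, hVi0] at this
    · funext z
      have hz := congrFun h2 z.1
      simp only [hV, dif_neg z.2, Subtype.coe_eta] at hz
      have hz' : ((g z : ℕ) : ℤ) - 1 = ((g' z : ℕ) : ℤ) - 1 := hz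
      clear hz
      show g z = g' z
      exact Fin.ext (by omega)
    · funext z
      have hz := congrFun h1 z.1
      simp only [hP, dif_neg z.2, Subtype.coe_eta] at hz
      exact hz
  haveI hfin : Finite {pv : (∀ i : Fin (e + 1), ZMod (n i)) × (Fin (e + 1) → ℤ) //
      Appears n Γ w pv.1 pv.2} := (app_finite n hnpos Γ w).to_subtype
  have hcard : Nat.card S ≤ count n Γ w := by
    rw [count_eq_nat_card]
    exact Nat.card_le_card_of_injective Φ hinj
  have hsub : Fintype.card {i : Fin (e + 1) // i ≠ i0} = e := by
    rw [Fintype.card_subtype_compl, Fintype.card_subtype_eq, Fintype.card_fin]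
    omega
  have hScard : Nat.card S = count n1 G w * (3 ^ e * m ^ e) := by
    rw [hS, Nat.card_prod, Nat.card_prod, count_eq_nat_card]
    congr 1
    rw [Nat.card_eq_fintype_card, Nat.card_eq_fintype_card, Fintype.card_fun,
      Fintype.card_fun, hsub, Fintype.card_fin, ZMod.card]
  have hm0 : (0 : ℝ) < (m : ℝ) := by exact_mod_cast hn1 0
  have hcount : (count n1 G w : ℝ) * (3 ^ e * (m : ℝ) ^ e) ≤ (count n Γ w : ℝ) := by
    have := hScard ▸ hcard
    exact_mod_cast this
  have hprod1 : ((∏ j, n1 j : ℕ) : ℝ) = (m : ℝ) := by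
    rw [Fin.prod_univ_one]
  have hprodd : ((∏ i, n i : ℕ) : ℝ) = (m : ℝ) ^ (e + 1) := by
    have : (∏ _i : Fin (e + 1), m) = m ^ (e + 1) := by simp
    rw [hn, this]
    push_cast
    ring
  have key : (3 : ℝ) ^ e * conc n1 G w ≤ conc n Γ w := by
    rw [conc, conc, hprod1, hprodd]
    rw [mul_div_assoc', div_le_div_iff₀ hm0 (by positivity)]
    have step : (count n1 G w : ℝ) * (3 ^ e * (m : ℝ) ^ e) * m ≤ (count n Γ w : ℝ) * m :=
      mul_le_mul_of_nonneg_right hcount hm0.le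
    calc (3 : ℝ) ^ e * (count n1 G w : ℝ) * (m : ℝ) ^ (e + 1)
        = (count n1 G w : ℝ) * (3 ^ e * (m : ℝ) ^ e) * m := by ring
      _ ≤ (count n Γ w : ℝ) * m := step
  have hfinal : conc n Γ w ≤ C (e + 1) w := conc_le_C hnpos Γ w
  have : e + 1 - 1 = e := by omega
  rw [this]
  linarith

lemma pair_bound {d : ℕ} (w : List α) (n : Fin d → ℕ) (hn : ∀ i, 0 < n i)
    (Γ : (∀ i, ZMod (n i)) → α) (v : Fin d → ℤ) :
    ((Set.ncard {p : ∀ i, ZMod (n i) | Appears n Γ w p v} : ℝ) +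
      (Set.ncard {p : ∀ i, ZMod (n i) | Appears n Γ w p (-v)} : ℝ)) ≤
      C 1 w * ((∏ i, n i : ℕ) : ℝ) := by
  classical
  haveI : ∀ i, NeZero (n i) := fun i => ⟨(hn i).ne'⟩
  set N := ∏ i, n i with hNdef
  have hNpos : 0 < N := Finset.prod_pos fun i _ => hn i
  haveI : NeZero N := ⟨hNpos.ne'⟩
  have hdvd : ∀ j, n j ∣ N := fun j => Finset.dvd_prod_of_mem n (Finset.mem_univ j)
  set n' : Fin 1 → ℕ := fun _ => N with hn'
  set Gp : (∀ i, ZMod (n i)) → (∀ j : Fin 1, ZMod (n' j)) → α :=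
    fun p t => Γ (fun j => p j +
      (ZMod.castHom (hdvd j) (ZMod (n j)) (t 0)) * ((v j : ℤ) : ZMod (n j))) with hGp
  set D1 := {x : ∀ i, ZMod (n i) // Appears n Γ w x v} with hD1
  set D2 := {x : ∀ i, ZMod (n i) // Appears n Γ w x (-v)} with hD2
  set X : (D1 ⊕ D2) → (∀ i, ZMod (n i)) :=
    Sum.elim (fun x => x.1) (fun x => x.1) with hX
  set E : (D1 ⊕ D2) → ℤ := Sum.elim (fun _ => 1) (fun _ => -1) with hE
  set Pf : (D1 ⊕ D2) × ZMod N → (∀ i, ZMod (n i)) :=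
    fun sq => fun j => X sq.1 j -
      ZMod.castHom (hdvd j) (ZMod (n j)) sq.2 * ((v j : ℤ) : ZMod (n j)) with hPf
  have hApp : ∀ sq : (D1 ⊕ D2) × ZMod N,
      Appears n' (Gp (Pf sq)) w (fun _ => sq.2) (fun _ => E sq.1) := by
    have hE1 : ∀ s : D1 ⊕ D2, E s = 1 ∨ E s = -1 := by
      rintro (x | x)
      · left; rfl
      · right; rfl
    rintro ⟨s, q⟩
    constructor
    · constructor
      · intro i
        rcases hE1 s with h | h <;> rw [h] <;> norm_num
      · intro h0
        have h1 := congrFun h0 0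
        rcases hE1 s with h | h <;> rw [h] at h1 <;> norm_num at h1
    · intro k
      rcases s with x | x
      · rw [← x.2.2 k, hGp]
        beta_reduce
        congr 1
        funext j
        simp only [hPf, hX, Sum.elim_inl, hE, map_add, map_intCast]
        push_cast
        ring
      · rw [← x.2.2 k, hGp]
        beta_reduce
        congr 1
        funext j
        simp only [hPf, hX, Sum.elim_inr, hE, map_add, map_intCast]
        push_cast [Pi.neg_apply]
        ring
  set Cod := {pqu : (∀ i, ZMod (n i)) × ((∀ j : Fin 1, ZMod (n' j)) × (Fin 1 → ℤ)) //
      Appears n' (Gp pqu.1) w pqu.2.1 pqu.2.2} with hCod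
  set Φ : (D1 ⊕ D2) × ZMod N → Cod :=
    fun sq => ⟨(Pf sq, ((fun _ => sq.2), fun _ => E sq.1)), hApp sq⟩ with hΦ
  have hinj : Function.Injective Φ := by
    rintro ⟨s, q⟩ ⟨s', q'⟩ hab
    have hval : ((Pf (s, q), ((fun _ => q), fun _ => E s)) :
        (∀ i, ZMod (n i)) × ((∀ j : Fin 1, ZMod (n' j)) × (Fin 1 → ℤ))) =
        (Pf (s', q'), ((fun _ => q'), fun _ => E s')) := congrArg Subtype.val hab
    have hPeq : Pf (s, q) = Pf (s', q') := congrArg Prod.fst hval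
    have hq : q = q' := congrFun (congrArg (fun t => t.2.1) hval) 0
    have hEe : E s = E s' := congrFun (congrArg (fun t => t.2.2) hval) 0
    have hXeq : X s = X s' := by
      funext j
      have h5 := congrFun hPeq j
      simp only [hPf] at h5
      rw [hq] at h5
      exact sub_left_injective h5
    clear hPeq hval
    have hs : s = s' := by
      rcases s with x | x <;> rcases s' with x' | x'
      · exact congrArg Sum.inl (Subtype.ext (by simpa [hX] using hXeq))
      · exfalso; simp [hE] at hEe
      · exfalso; simp [hE] at hEe
      · exact congrArg Sum.inr (Subtype.ext (by simpa [hX] using hXeq))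
    rw [hs, hq]
  -- finiteness
  haveI hfib : ∀ p : ∀ i, ZMod (n i),
      Finite {qu : (∀ j : Fin 1, ZMod (n' j)) × (Fin 1 → ℤ) //
        Appears n' (Gp p) w qu.1 qu.2} :=
    fun p => (app_finite n' (fun _ => hNpos) (Gp p) w).to_subtype
  have eqv : Cod ≃ Σ p : ∀ i, ZMod (n i),
      {qu : (∀ j : Fin 1, ZMod (n' j)) × (Fin 1 → ℤ) // Appears n' (Gp p) w qu.1 qu.2} :=
    ⟨fun c => ⟨c.1.1, ⟨c.1.2, c.2⟩⟩, fun s => ⟨(s.1, s.2.1), s.2.2⟩,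
      fun c => rfl, fun s => rfl⟩
  haveI : Finite Cod := Finite.of_equiv _ eqv.symm
  have hdom : Nat.card ((D1 ⊕ D2) × ZMod N) =
      (Set.ncard {p : ∀ i, ZMod (n i) | Appears n Γ w p v} +
        Set.ncard {p : ∀ i, ZMod (n i) | Appears n Γ w p (-v)}) * N := by
    rw [Nat.card_prod, Nat.card_sum, Nat.card_zmod, hD1, hD2,
      ← Nat.card_coe_set_eq, ← Nat.card_coe_set_eq]
    rfl
  have hcod : Nat.card Cod = ∑ p : ∀ i, ZMod (n i), count n' (Gp p) w := by
    rw [Nat.card_congr eqv]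
    haveI : ∀ p : ∀ i, ZMod (n i), Fintype {qu : (∀ j : Fin 1, ZMod (n' j)) × (Fin 1 → ℤ) //
        Appears n' (Gp p) w qu.1 qu.2} := fun p => Fintype.ofFinite _
    simp only [Nat.card_eq_fintype_card, Fintype.card_sigma]
    congr 1
    funext p
    rw [count_eq_nat_card, Nat.card_eq_fintype_card]
  have hle : Nat.card ((D1 ⊕ D2) × ZMod N) ≤ Nat.card Cod :=
    Nat.card_le_card_of_injective Φ hinj
  -- each 1-dim grid count is at most C 1 w * N
  have hone : ∀ p : ∀ i, ZMod (n i), (count n' (Gp p) w : ℝ) ≤ C 1 w * N := by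
    intro p
    have h1 := conc_le_C (n := n') (fun _ => hNpos) (Gp p) w
    rw [conc] at h1
    have hprod : ((∏ j, n' j : ℕ) : ℝ) = (N : ℝ) := by rw [Fin.prod_univ_one]
    rw [hprod, div_le_iff₀ (by exact_mod_cast hNpos)] at h1
    exact h1
  have hsum : ((∑ p : ∀ i, ZMod (n i), count n' (Gp p) w : ℕ) : ℝ) ≤
      (Fintype.card (∀ i, ZMod (n i)) : ℝ) * (C 1 w * N) := by
    push_cast
    calc ∑ p : ∀ i, ZMod (n i), (count n' (Gp p) w : ℝ)
        ≤ ∑ _p : ∀ i, ZMod (n i), C 1 w * N := Finset.sum_le_sum fun p _ => hone p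
      _ = (Fintype.card (∀ i, ZMod (n i)) : ℝ) * (C 1 w * N) := by
          rw [Finset.sum_const, Finset.card_univ, nsmul_eq_mul]
  have hcardP : (Fintype.card (∀ i, ZMod (n i)) : ℝ) = (N : ℝ) := by
    rw [Fintype.card_pi]
    norm_cast
    exact Finset.prod_congr rfl fun i _ => ZMod.card (n i)
  have hNR : (0 : ℝ) < (N : ℝ) := by exact_mod_cast hNpos
  have final : ((Set.ncard {p : ∀ i, ZMod (n i) | Appears n Γ w p v} : ℝ) +
      (Set.ncard {p : ∀ i, ZMod (n i) | Appears n Γ w p (-v)} : ℝ)) * N ≤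
      (C 1 w * N) * N := by
    have h1 : ((Nat.card ((D1 ⊕ D2) × ZMod N) : ℕ) : ℝ) ≤ ((Nat.card Cod : ℕ) : ℝ) := by
      exact_mod_cast hle
    rw [hdom, hcod] at h1
    have h2 : (((Set.ncard {p : ∀ i, ZMod (n i) | Appears n Γ w p v} +
        Set.ncard {p : ∀ i, ZMod (n i) | Appears n Γ w p (-v)}) * N : ℕ) : ℝ) =
        ((Set.ncard {p : ∀ i, ZMod (n i) | Appears n Γ w p v} : ℝ) +
        (Set.ncard {p : ∀ i, ZMod (n i) | Appears n Γ w p (-v)} : ℝ)) * N := by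
      push_cast; ring
    rw [h2] at h1
    calc _ ≤ ((∑ p : ∀ i, ZMod (n i), count n' (Gp p) w : ℕ) : ℝ) := h1
      _ ≤ (Fintype.card (∀ i, ZMod (n i)) : ℝ) * (C 1 w * N) := hsum
      _ = (C 1 w * N) * N := by rw [hcardP]; ring
  exact le_of_mul_le_mul_right final hNR

lemma IsDir.neg {d : ℕ} {v : Fin d → ℤ} (h : IsDir d v) : IsDir d (-v) := by
  constructor
  · intro i
    rcases h.1 i with h' | h' | h' <;> simp [Pi.neg_apply, h']
  · simpa [neg_eq_zero] using h.2

lemma count_le_sum {d : ℕ} (n : Fin d → ℕ) (hn : ∀ i, 0 < n i)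
    (Γ : (∀ i, ZMod (n i)) → α) (w : List α) :
    count n Γ w ≤ ∑ v ∈ Dirs d, Set.ncard {p : ∀ i, ZMod (n i) | Appears n Γ w p v} := by
  classical
  haveI : ∀ i, NeZero (n i) := fun i => ⟨(hn i).ne'⟩
  have hset : {pv : (∀ i, ZMod (n i)) × (Fin d → ℤ) | Appears n Γ w pv.1 pv.2} =
      ↑((Finset.univ ×ˢ Dirs d).filter fun pv => Appears n Γ w pv.1 pv.2) := by
    ext pv
    simp only [Set.mem_setOf_eq, Finset.coe_filter, Finset.mem_product, Finset.mem_univ,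
      true_and, Set.mem_setOf_eq]
    constructor
    · intro h; exact ⟨mem_Dirs.2 h.1, h⟩
    · tauto
  rw [count, hset, Set.ncard_coe_finset]
  rw [Finset.card_eq_sum_card_fiberwise (f := Prod.snd) (t := Dirs d)
    (fun pv hpv => by
      simp only [Finset.mem_coe, Finset.mem_filter] at hpv
      exact mem_Dirs.2 hpv.2.1)]
  apply Finset.sum_le_sum
  intro v hv
  have hs : {p : ∀ i, ZMod (n i) | Appears n Γ w p v} =
      ↑(Finset.univ.filter fun p => Appears n Γ w p v) := by
    ext p; simp
  rw [hs, Set.ncard_coe_finset]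
  apply Finset.card_le_card_of_injOn (fun pv => pv.1)
  · intro pv hpv
    simp only [Finset.mem_coe, Finset.mem_filter, Finset.mem_univ, true_and] at hpv ⊢
    obtain ⟨⟨-, happ⟩, hsnd⟩ := hpv
    rwa [hsnd] at happ
  · intro a ha b hb hfst
    simp only [Finset.coe_filter, Set.mem_setOf_eq, Finset.mem_filter] at ha hb
    have : a.2 = b.2 := ha.2.trans hb.2.symm
    exact Prod.ext hfst this

lemma upper_aux (w : List α) (hw : TwoLetters w) (d : ℕ) :
    C d w ≤ ((3 : ℝ) ^ d - 1) / 2 * C 1 w := by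
  classical
  obtain ⟨x, hx, y, hy, hxy⟩ := hw
  apply csSup_le (concSet_nonempty d w x)
  rintro r ⟨n, Γ, hn, rfl⟩
  set N := ∏ i, n i with hNdef
  have hNpos : 0 < N := Finset.prod_pos fun i _ => hn i
  have hNR : (0 : ℝ) < (N : ℝ) := by exact_mod_cast hNpos
  set g : (Fin d → ℤ) → ℝ := fun v => (Set.ncard {p : ∀ i, ZMod (n i) | Appears n Γ w p v} : ℝ)
    with hg
  have h1 : (count n Γ w : ℝ) ≤ ∑ v ∈ Dirs d, g v := by
    have := count_le_sum n hn Γ w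
    calc (count n Γ w : ℝ) ≤
        ((∑ v ∈ Dirs d, Set.ncard {p : ∀ i, ZMod (n i) | Appears n Γ w p v} : ℕ) : ℝ) := by
          exact_mod_cast this
      _ = ∑ v ∈ Dirs d, g v := by push_cast [hg]; rfl
  have h2 : ∑ v ∈ Dirs d, g (-v) = ∑ v ∈ Dirs d, g v := by
    refine Finset.sum_equiv (Equiv.neg (Fin d → ℤ)) (fun v => ?_) (fun v _ => rfl)
    simp only [Equiv.neg_apply, mem_Dirs]
    constructor
    · exact fun h => h.neg
    · intro h; simpa using h.neg
  have h3 : ∀ v ∈ Dirs d, g v + g (-v) ≤ C 1 w * N :=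
    fun v hv => pair_bound w n hn Γ v
  have h4 : ∑ v ∈ Dirs d, (g v + g (-v)) ≤ ((Dirs d).card : ℝ) * (C 1 w * N) := by
    calc ∑ v ∈ Dirs d, (g v + g (-v)) ≤ ∑ _v ∈ Dirs d, C 1 w * N := Finset.sum_le_sum h3
      _ = ((Dirs d).card : ℝ) * (C 1 w * N) := by rw [Finset.sum_const, nsmul_eq_mul]
  have hsplit : ∑ v ∈ Dirs d, (g v + g (-v)) = (∑ v ∈ Dirs d, g v) + ∑ v ∈ Dirs d, g (-v) :=
    Finset.sum_add_distrib
  have hcard : ((Dirs d).card : ℝ) = 3 ^ d - 1 := by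
    rw [card_Dirs]
    have h1 : (1 : ℕ) ≤ 3 ^ d := Nat.one_le_pow d 3 (by norm_num)
    push_cast [Nat.cast_sub h1]
    ring
  have hmain : 2 * (count n Γ w : ℝ) ≤ ((3 : ℝ) ^ d - 1) * (C 1 w * N) := by
    rw [← hcard]
    calc 2 * (count n Γ w : ℝ) ≤ 2 * ∑ v ∈ Dirs d, g v := by linarith
      _ = ∑ v ∈ Dirs d, (g v + g (-v)) := by rw [hsplit, h2]; ring
      _ ≤ ((Dirs d).card : ℝ) * (C 1 w * N) := h4
  rw [conc, ← hNdef, div_le_iff₀ hNR]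
  nlinarith [hmain]

theorem statement1 (w : List α) (hw : TwoLetters w) (d : ℕ) (hd : 0 < d) :
    (3 : ℝ) ^ (d - 1) * C 1 w ≤ C d w ∧
      C d w ≤ ((3 : ℝ) ^ d - 1) / 2 * C 1 w := by
  constructor
  · obtain ⟨x, hx, y, hy, hxy⟩ := hw
    have h3 : (0 : ℝ) < 3 ^ (d - 1) := by positivity
    have hC : C 1 w ≤ C d w / 3 ^ (d - 1) := by
      apply csSup_le (concSet_nonempty 1 w x)
      rintro r ⟨n1, G, hn1, rfl⟩
      rw [le_div_iff₀ h3]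
      have := lower_aux hd w n1 hn1 G
      linarith
    calc (3 : ℝ) ^ (d - 1) * C 1 w ≤ 3 ^ (d - 1) * (C d w / 3 ^ (d - 1)) :=
        mul_le_mul_of_nonneg_left hC h3.le
      _ = C d w := by field_simp
  · exact upper_aux w hw d

end WordGrid
end

section
/- Let ℓ ≥ 4 be an integer and let A, B be distinct letters. Then the word A B^{ℓ−1} (the letter A followed by ℓ−1 copies of B) is not 2-stackable: C_2(A B^{ℓ−1}) > 3·C_1(A B^{ℓ−1}) = 6/ℓ. -/
open scoped BigOperators

namespace WordGrid

variable {α : Type*}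

variable {A B : α}

def D8 : Finset (Fin 2 → ℤ) :=
  {![1,0], ![-1,0], ![0,1], ![0,-1], ![1,1], ![-1,-1], ![1,-1], ![-1,1]}

lemma isDir_two_iff (v : Fin 2 → ℤ) : IsDir 2 v ↔ v ∈ D8 := by
  constructor
  · rintro ⟨h1, h2⟩
    have hv : v = ![v 0, v 1] := by
      funext i; fin_cases i <;> simp
    have h0 := h1 0
    have h1' := h1 1
    rcases h0 with h0|h0|h0 <;> rcases h1' with hh|hh|hh <;>
      rw [hv, h0, hh] <;> first
        | decide
        | (exfalso; apply h2; rw [hv, h0, hh]; funext i; fin_cases i <;> rfl)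
  · intro hv
    fin_cases hv <;>
      exact ⟨by intro i; fin_cases i <;> simp,
        by intro h; first | simpa using congrFun h 0 | simpa using congrFun h 1⟩

private lemma ite_eq_ite (hAB : A ≠ B) (c₁ c₂ : Prop) [Decidable c₁] [Decidable c₂] :
    ((if c₁ then A else B) = if c₂ then A else B) ↔ (c₁ ↔ c₂) := by
  by_cases h₁ : c₁ <;> by_cases h₂ : c₂ <;> simp [h₁, h₂, hAB, hAB.symm]

private lemma wlen (A B : α) {ℓ : ℕ} (h : 1 ≤ ℓ) :
    (A :: List.replicate (ℓ - 1) B).length = ℓ := by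
  simp only [List.length_cons, List.length_replicate]; omega

private lemma wget (A B : α) {ℓ : ℕ} (k : Fin (A :: List.replicate (ℓ - 1) B).length) :
    (A :: List.replicate (ℓ - 1) B).get k = if (k : ℕ) = 0 then A else B := by
  rcases k with ⟨k, hk⟩
  cases k with
  | zero => simp
  | succ j =>
    simp only [List.get_eq_getElem, List.getElem_cons_succ]
    rw [List.getElem_replicate]
    simp

lemma appears_iff (hAB : A ≠ B) {ℓ : ℕ} (hℓ : 1 ≤ ℓ) {d : ℕ} (n : Fin d → ℕ)
    (P : (∀ i, ZMod (n i)) → Prop) [DecidablePred P]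
    (p : ∀ i, ZMod (n i)) (v : Fin d → ℤ) :
    Appears n (fun q => if P q then A else B) (A :: List.replicate (ℓ - 1) B) p v ↔
      (IsDir d v ∧ ∀ k : ℕ, k < ℓ →
        (P (fun j => p j + (((k : ℤ) * v j : ℤ) : ZMod (n j))) ↔ k = 0)) := by
  unfold Appears
  refine and_congr_right fun _ => ⟨fun h k hk => ?_, fun h k => ?_⟩
  · have hk' : k < (A :: List.replicate (ℓ - 1) B).length := by
      have := wlen A B hℓ; omega
    have := h ⟨k, hk'⟩
    rw [wget] at this
    exact (ite_eq_ite hAB _ _).mp this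
  · rw [wget]
    refine (ite_eq_ite hAB _ _).mpr (h k.val ?_)
    have h1 := k.isLt
    have := wlen A B hℓ
    omega


lemma conc_one_le (hAB : A ≠ B) {ℓ : ℕ} (hℓ : 4 ≤ ℓ) (n : Fin 1 → ℕ) (hn : ∀ i, 0 < n i)
    (Γ : (∀ i : Fin 1, ZMod (n i)) → α) :
    conc n Γ (A :: List.replicate (ℓ - 1) B) ≤ 2 / (ℓ : ℝ) := by
  classical
  haveI : ∀ i, NeZero (n i) := fun i => ⟨(hn i).ne'⟩
  set w := A :: List.replicate (ℓ - 1) B with hwdef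
  have hw : w.length = ℓ := wlen A B (by omega)
  -- evaluation of an appearance at index j
  have happ : ∀ (v : Fin 1 → ℤ) (p), Appears n Γ w p v → ∀ j : ℕ, j < ℓ →
      Γ (fun i => p i + (((j : ℤ) * v i : ℤ) : ZMod (n i))) = if j = 0 then A else B := by
    intro v p hp j hj
    have hj' : j < w.length := by omega
    have := hp.2 ⟨j, hj'⟩
    rw [wget] at this
    simpa using this
  set S : ℤ → Set (∀ i : Fin 1, ZMod (n i)) :=
    fun ε => {p | Appears n Γ w p (fun _ => ε)} with hSdef
  have key : ∀ (ε : ℤ) (p), p ∈ S ε → ∀ (p'), p' ∈ S ε → ∀ j : ℕ, j < ℓ →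
      p' 0 = p 0 + (((j : ℤ) * ε : ℤ) : ZMod (n 0)) → j = 0 := by
    intro ε p hp p' hp' j hj hpp'
    by_contra hj0
    have h1 : Γ p' = A := by
      have := happ _ _ hp' 0 (by omega)
      simpa using this
    have h2 : Γ p' = B := by
      have h3 := happ _ _ hp j hj
      rw [if_neg hj0] at h3
      have h4 : p' = fun i => p i + (((j : ℤ) * ε : ℤ) : ZMod (n i)) := by
        funext i
        have hi : i = 0 := Subsingleton.elim i 0
        subst hi
        exact hpp'
      rw [← h4] at h3
      exact h3
    exact hAB (h1.symm.trans h2)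
  have hcard : ∀ ε : ℤ, (S ε).ncard * ℓ ≤ n 0 := by
    intro ε
    let f : (S ε) × Fin ℓ → ZMod (n 0) :=
      fun q => q.1.1 0 + (((q.2 : ℤ) * ε : ℤ) : ZMod (n 0))
    have main : ∀ (p p' : ∀ i : Fin 1, ZMod (n i)), p ∈ S ε → p' ∈ S ε →
        ∀ (k k' : Fin ℓ), k'.val ≤ k.val →
        p 0 + (((k : ℤ) * ε : ℤ) : ZMod (n 0)) = p' 0 + (((k' : ℤ) * ε : ℤ) : ZMod (n 0)) →
        k = k' ∧ p 0 = p' 0 := by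
      intro p p' hp hp' k k' hkk h
      have hj : p' 0 = p 0 + ((((k.val - k'.val : ℕ) : ℤ) * ε : ℤ) : ZMod (n 0)) := by
        have hc : ((k.val - k'.val : ℕ) : ℤ) = (k.val : ℤ) - (k'.val : ℤ) := by
          push_cast [Nat.cast_sub hkk]; ring
        rw [hc]
        push_cast at h ⊢
        linear_combination -h
      have hj0 := key ε p hp p' hp' (k.val - k'.val) (by omega) hj
      have hk : k = k' := by
        apply Fin.ext; omega
      refine ⟨hk, ?_⟩
      subst hk
      exact add_right_cancel h
    have hinj : Function.Injective f := by
      rintro ⟨⟨p, hp⟩, k⟩ ⟨⟨p', hp'⟩, k'⟩ h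
      simp only [f] at h
      have hres : k = k' ∧ p 0 = p' 0 := by
        rcases le_total k'.val k.val with hle | hle
        · exact main p p' hp hp' k k' hle h
        · obtain ⟨h1, h2⟩ := main p' p hp' hp k' k hle h.symm
          exact ⟨h1.symm, h2.symm⟩
      obtain ⟨h1, h2⟩ := hres
      have hpp : p = p' := by
        funext i
        have hi : i = 0 := Subsingleton.elim i 0
        subst hi
        exact h2
      subst hpp
      simp [h1]
    calc (S ε).ncard * ℓ = Nat.card ((S ε) × Fin ℓ) := by
          rw [Nat.card_prod, Nat.card_coe_set_eq]
          simp
      _ ≤ Nat.card (ZMod (n 0)) := Nat.card_le_card_of_injective f hinj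
      _ = n 0 := Nat.card_zmod _
  -- the full appearance set is covered by two copies
  have hsub : {pv : (∀ i : Fin 1, ZMod (n i)) × (Fin 1 → ℤ) | Appears n Γ w pv.1 pv.2} ⊆
      ((fun p => (p, fun _ : Fin 1 => (1 : ℤ))) '' S 1) ∪
      ((fun p => (p, fun _ : Fin 1 => (-1 : ℤ))) '' S (-1)) := by
    rintro ⟨p, v⟩ hpv
    replace hpv : Appears n Γ w p v := hpv
    have hd : IsDir 1 v := hpv.1
    have hv : v = fun _ : Fin 1 => v 0 := by
      funext i; rw [Subsingleton.elim i 0]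
    rcases hd.1 0 with h | h | h
    · right
      have hveq : v = fun _ : Fin 1 => (-1 : ℤ) := by rw [hv, h]
      refine ⟨p, ?_, ?_⟩
      · show Appears n Γ w p fun _ => (-1 : ℤ)
        rwa [hveq] at hpv
      · rw [hveq]
    · exfalso
      apply hd.2
      funext i
      rw [Subsingleton.elim i 0, h]
      rfl
    · left
      have hveq : v = fun _ : Fin 1 => (1 : ℤ) := by rw [hv, h]
      refine ⟨p, ?_, ?_⟩
      · show Appears n Γ w p fun _ => (1 : ℤ)
        rwa [hveq] at hpv
      · rw [hveq]
  have hfin : ∀ ε : ℤ, (S ε).Finite := fun ε => Set.toFinite _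
  have hcount : count n Γ w ≤ (S 1).ncard + (S (-1)).ncard := by
    unfold count
    refine le_trans (Set.ncard_le_ncard hsub ?_) ?_
    · exact (((hfin 1).image _).union (((hfin (-1)).image _)))
    · refine le_trans (Set.ncard_union_le _ _) ?_
      rw [Set.ncard_image_of_injective _ (fun a b h => (Prod.ext_iff.mp h).1),
        Set.ncard_image_of_injective _ (fun a b h => (Prod.ext_iff.mp h).1)]
  -- final arithmetic
  have hprod : (∏ i, n i) = n 0 := by
    rw [Fin.prod_univ_one]
  unfold conc
  rw [hprod]
  have hn0 : (0 : ℝ) < (n 0 : ℝ) := by exact_mod_cast hn 0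
  have hl0 : (0 : ℝ) < (ℓ : ℝ) := by positivity
  rw [div_le_div_iff₀ hn0 hl0]
  have hfinal : (count n Γ w) * ℓ ≤ 2 * n 0 := by
    calc (count n Γ w) * ℓ ≤ ((S 1).ncard + (S (-1)).ncard) * ℓ :=
          Nat.mul_le_mul_right _ hcount
      _ = (S 1).ncard * ℓ + (S (-1)).ncard * ℓ := by ring
      _ ≤ n 0 + n 0 := Nat.add_le_add (hcard 1) (hcard (-1))
      _ = 2 * n 0 := by ring
  exact_mod_cast hfinal


lemma natCast_ne_zero_zmod {N k : ℕ} [NeZero N] (hk : 0 < k) (hkN : k < N) :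
    ((k : ZMod N)) ≠ 0 := by
  intro h0
  have hdvd := (ZMod.natCast_eq_zero_iff k N).mp h0
  have := Nat.le_of_dvd hk hdvd
  omega

lemma conc_one_grid (hAB : A ≠ B) {ℓ : ℕ} (hℓ : 4 ≤ ℓ) :
    ∃ Γ : (∀ i : Fin 1, ZMod ((fun _ => ℓ) i)) → α,
      conc (fun _ => ℓ) Γ (A :: List.replicate (ℓ - 1) B) = 2 / (ℓ : ℝ) := by
  classical
  haveI : NeZero ℓ := ⟨by omega⟩
  refine ⟨fun q => if q 0 = 0 then A else B, ?_⟩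
  set w := A :: List.replicate (ℓ - 1) B with hwdef
  have hset : {pv : (∀ i : Fin 1, ZMod ((fun _ => ℓ) i)) × (Fin 1 → ℤ) |
      Appears (fun _ => ℓ) (fun q => if q 0 = 0 then A else B) w pv.1 pv.2} =
      {((fun _ => 0), fun _ => 1), ((fun _ => 0), fun _ => -1)} := by
    ext ⟨p, v⟩
    rw [Set.mem_setOf_eq,
      appears_iff hAB (by omega) (fun _ => ℓ) (fun q => q 0 = 0) p v]
    constructor
    · rintro ⟨hd, hall⟩
      have hp0 : p 0 = 0 := by
        have := (hall 0 (by omega)).mpr rfl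
        simpa using this
      have hp : p = fun _ : Fin 1 => (0 : ZMod ℓ) := by
        funext i; rw [Subsingleton.elim i 0]; exact hp0
      have hv : v = fun _ : Fin 1 => v 0 := by
        funext i; rw [Subsingleton.elim i 0]
      rcases hd.1 0 with h | h | h
      · exact Set.mem_insert_iff.mpr (Or.inr (Set.mem_singleton_iff.mpr
          (Prod.ext_iff.mpr ⟨hp, by rw [hv, h]⟩)))
      · exfalso
        apply hd.2
        funext i
        rw [Subsingleton.elim i 0, h]
        rfl
      · exact Set.mem_insert_iff.mpr (Or.inl (Prod.ext_iff.mpr ⟨hp, by rw [hv, h]⟩))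
    · intro hmem
      have hkey : ∀ (ε : ℤ), ε = 1 ∨ ε = -1 → ∀ k : ℕ, k < ℓ →
          (((fun _ : Fin 1 => (0 : ZMod ℓ)) 0 + (((k : ℤ) * ε : ℤ) : ZMod ℓ) = 0) ↔ k = 0) := by
        intro ε hε k hk
        have hcast : ((fun _ : Fin 1 => (0 : ZMod ℓ)) 0 + (((k : ℤ) * ε : ℤ) : ZMod ℓ)) =
            ((k : ZMod ℓ)) * ((ε : ℤ) : ZMod ℓ) := by
          push_cast
          ring
        rw [hcast]
        constructor
        · intro h0
          by_contra hk0
          have hne := natCast_ne_zero_zmod (N := ℓ) (by omega) hk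
          rcases hε with rfl | rfl
          · simp at h0; exact hne h0
          · simp at h0; exact hne h0
        · rintro rfl
          simp
      simp only [Set.mem_insert_iff, Set.mem_singleton_iff] at hmem
      rcases hmem with h | h <;> rw [Prod.ext_iff] at h <;> obtain ⟨hp, hv⟩ := h <;>
        simp only at hp hv <;> subst hp <;> subst hv
      · refine ⟨⟨fun i => by fin_cases i <;> simp, ?_⟩, fun k hk => hkey 1 (Or.inl rfl) k hk⟩
        intro h
        simpa using congrFun h 0
      · refine ⟨⟨fun i => by fin_cases i <;> simp, ?_⟩, fun k hk => hkey (-1) (Or.inr rfl) k hk⟩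
        intro h
        simpa using congrFun h 0
  unfold conc count
  rw [hset]
  rw [Set.ncard_pair (by
    intro h
    have := congrFun (Prod.ext_iff.mp h).2 0
    simp at this)]
  rw [Fin.prod_univ_one]
  norm_num

lemma C_one_eq (hAB : A ≠ B) {ℓ : ℕ} (hℓ : 4 ≤ ℓ) :
    C 1 (A :: List.replicate (ℓ - 1) B) = 2 / (ℓ : ℝ) := by
  have hub : ∀ x ∈ {x : ℝ | ∃ (n : Fin 1 → ℕ) (Γ : (∀ i, ZMod (n i)) → α),
      (∀ i, 0 < n i) ∧ x = conc n Γ (A :: List.replicate (ℓ - 1) B)}, x ≤ 2 / (ℓ : ℝ) := by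
    rintro x ⟨n, Γ, hn, rfl⟩
    exact conc_one_le hAB hℓ n hn Γ
  have hmem : (2 / (ℓ : ℝ)) ∈ {x : ℝ | ∃ (n : Fin 1 → ℕ) (Γ : (∀ i, ZMod (n i)) → α),
      (∀ i, 0 < n i) ∧ x = conc n Γ (A :: List.replicate (ℓ - 1) B)} := by
    obtain ⟨Γ, hΓ⟩ := conc_one_grid hAB hℓ (B := B)
    exact ⟨fun _ => ℓ, Γ, fun i => by show 0 < ℓ; omega, hΓ.symm⟩
  exact le_antisymm (csSup_le ⟨_, hmem⟩ hub) (le_csSup ⟨2 / (ℓ : ℝ), hub⟩ hmem)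

private lemma ncard_prod {β γ : Type*} (s : Set β) (t : Set γ) :
    (s ×ˢ t).ncard = s.ncard * t.ncard := by
  rw [← Nat.card_coe_set_eq, ← Nat.card_coe_set_eq, ← Nat.card_coe_set_eq,
    ← Nat.card_prod]
  exact Nat.card_congr (Equiv.Set.prod s t)

lemma conc_two_le (w : List α) (n : Fin 2 → ℕ) (hn : ∀ i, 0 < n i)
    (Γ : (∀ i : Fin 2, ZMod (n i)) → α) :
    conc n Γ w ≤ 8 := by
  haveI : ∀ i, NeZero (n i) := fun i => ⟨(hn i).ne'⟩
  have hsub : {pv : (∀ i : Fin 2, ZMod (n i)) × (Fin 2 → ℤ) | Appears n Γ w pv.1 pv.2} ⊆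
      (Set.univ : Set (∀ i : Fin 2, ZMod (n i))) ×ˢ (↑D8 : Set (Fin 2 → ℤ)) := by
    rintro ⟨p, v⟩ hpv
    exact ⟨trivial, (isDir_two_iff v).mp hpv.1⟩
  have hcount : count n Γ w ≤ (∏ i, n i) * 8 := by
    refine le_trans (Set.ncard_le_ncard hsub (Set.finite_univ.prod D8.finite_toSet)) ?_
    rw [ncard_prod, Set.ncard_univ, Set.ncard_coe_finset]
    have hcard : Nat.card (∀ i : Fin 2, ZMod (n i)) = ∏ i, n i := by
      rw [Nat.card_pi]
      exact Finset.prod_congr rfl fun i _ => Nat.card_zmod (n i)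
    rw [hcard]
    have : D8.card = 8 := by decide
    rw [this]
  unfold conc
  have hprodpos : (0 : ℝ) < ((∏ i, n i : ℕ) : ℝ) := by
    have : 0 < ∏ i, n i := Finset.prod_pos fun i _ => hn i
    exact_mod_cast this
  rw [div_le_iff₀ hprodpos]
  calc ((count n Γ w : ℝ)) ≤ ((∏ i, n i : ℕ) : ℝ) * 8 := by exact_mod_cast hcount
    _ = 8 * ((∏ i, n i : ℕ) : ℝ) := by ring

lemma conc_lattice (hAB : A ≠ B) {ℓ N : ℕ} (hℓ : 4 ≤ ℓ) (hlN : ℓ ≤ N)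
    (h2 : ¬ 2 ∣ N) (h3 : ¬ 3 ∣ N) :
    ∃ Γ : (∀ i : Fin 2, ZMod ((fun _ => N) i)) → α,
      conc (fun _ => N) Γ (A :: List.replicate (ℓ - 1) B) = 8 / (N : ℝ) := by
  classical
  haveI : NeZero N := ⟨by omega⟩
  set w := A :: List.replicate (ℓ - 1) B with hwdef
  set P : (∀ i : Fin 2, ZMod ((fun _ => N) i)) → Prop := fun q => q 0 + 2 * q 1 = 0 with hPdef
  refine ⟨fun q => if P q then A else B, ?_⟩
  -- the eight direction sums are units
  have h2u : IsUnit ((2 : ZMod N)) := by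
    have := (ZMod.isUnit_iff_coprime 2 N).mpr ((Nat.prime_two.coprime_iff_not_dvd).mpr h2)
    simpa using this
  have h3u : IsUnit ((3 : ZMod N)) := by
    have := (ZMod.isUnit_iff_coprime 3 N).mpr ((Nat.prime_three.coprime_iff_not_dvd).mpr h3)
    simpa using this
  have hu : ∀ v ∈ D8, IsUnit (((v 0 + 2 * v 1 : ℤ) : ZMod N)) := by
    intro v hv
    fin_cases hv <;>
      simp only [Matrix.cons_val_zero, Matrix.cons_val_one, Matrix.head_cons] <;>
      norm_num
    · exact h2u
    · exact h2u
    · exact h3u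
    · exact h3u
  -- the appearance set
  have hset : {pv : (∀ i : Fin 2, ZMod ((fun _ => N) i)) × (Fin 2 → ℤ) |
      Appears (fun _ => N) (fun q => if P q then A else B) w pv.1 pv.2} =
      {p : ∀ i : Fin 2, ZMod ((fun _ => N) i) | P p} ×ˢ (↑D8 : Set (Fin 2 → ℤ)) := by
    ext ⟨p, v⟩
    rw [Set.mem_setOf_eq, appears_iff hAB (by omega) (fun _ => N) P p v]
    constructor
    · rintro ⟨hd, hall⟩
      refine ⟨?_, (isDir_two_iff v).mp hd⟩
      have := (hall 0 (by omega)).mpr rfl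
      simpa [hPdef] using this
    · rintro ⟨hp, hv⟩
      refine ⟨(isDir_two_iff v).mpr hv, ?_⟩
      intro k hk
      rcases Nat.eq_zero_or_pos k with rfl | hkpos
      · refine iff_of_true ?_ rfl
        simp only [Set.mem_setOf_eq, hPdef] at hp ⊢
        simpa using hp
      · refine iff_of_false ?_ (by omega)
        intro hPP
        have hp' : p 0 + 2 * p 1 = 0 := hp
        have hz : ((k : ZMod N)) * (((v 0 + 2 * v 1 : ℤ) : ZMod N)) = 0 := by
          have hPP' : (p 0 + (((k : ℤ) * v 0 : ℤ) : ZMod N)) +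
              2 * (p 1 + (((k : ℤ) * v 1 : ℤ) : ZMod N)) = 0 := hPP
          push_cast at hPP' ⊢
          linear_combination hPP' - hp'
        have hk0 : ((k : ZMod N)) = 0 := ((hu v hv).mul_left_eq_zero).mp hz
        exact natCast_ne_zero_zmod hkpos (by omega) hk0
  -- cardinality of the line
  have hline : ({p : ∀ i : Fin 2, ZMod ((fun _ => N) i) | P p}).ncard = N := by
    rw [← Nat.card_coe_set_eq]
    have hbij := Nat.card_eq_of_bijective
      (f := fun y : ZMod N =>
        (⟨![-(2 * y), y], by
          simp only [Set.mem_setOf_eq, hPdef, Matrix.cons_val_zero, Matrix.cons_val_one,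
            Matrix.head_cons]
          ring⟩ :
          {p : ∀ i : Fin 2, ZMod ((fun _ => N) i) | P p}))
      ⟨by
        intro a b h
        have := congrArg (fun q => q.1 1) h
        simpa using this,
       by
        rintro ⟨p, hp⟩
        refine ⟨p 1, Subtype.ext (funext fun i => ?_)⟩
        fin_cases i
        · show -(2 * p 1) = p 0
          have hp' : p 0 + 2 * p 1 = 0 := hp
          linear_combination -hp'
        · rfl⟩
    rw [← hbij, Nat.card_zmod]
  unfold conc count
  rw [hset, ncard_prod, hline, Set.ncard_coe_finset]
  have hD : D8.card = 8 := by decide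
  rw [hD]
  have hprod : (∏ i : Fin 2, (fun _ => N) i) = N * N := by
    rw [Fin.prod_univ_two]
  rw [hprod]
  have hN0 : (N : ℝ) ≠ 0 := by
    have : 0 < N := by omega
    exact_mod_cast this.ne'
  push_cast
  field_simp

def g8 : ZMod 8 → ZMod 8 := ![0, 4, 1, 7, 5, 2, 0, 0]

lemma conc_eight (hAB : A ≠ B) :
    ∃ Γ : (∀ i : Fin 2, ZMod ((fun _ : Fin 2 => 8) i)) → α,
      conc (fun _ => 8) Γ (A :: List.replicate (8 - 1) B) = 50 / 64 := by
  classical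
  set P : (∀ i : Fin 2, ZMod ((fun _ : Fin 2 => 8) i)) → Prop :=
    fun q => q 0 = g8 (q 1) with hPdef
  refine ⟨fun q => if P q then A else B, ?_⟩
  set F : Finset ((∀ i : Fin 2, ZMod ((fun _ : Fin 2 => 8) i)) × (Fin 2 → ℤ)) :=
    ((Finset.univ : Finset (∀ i : Fin 2, ZMod ((fun _ : Fin 2 => 8) i))) ×ˢ D8).filter
      (fun pv => P pv.1 ∧ ∀ k : Fin 8, 0 < (k : ℕ) →
        ¬ P (fun j => pv.1 j + ((((k : ℕ) : ℤ) * pv.2 j : ℤ) : ZMod 8))) with hFdef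
  have hset : {pv : (∀ i : Fin 2, ZMod ((fun _ : Fin 2 => 8) i)) × (Fin 2 → ℤ) |
      Appears (fun _ => 8) (fun q => if P q then A else B)
        (A :: List.replicate (8 - 1) B) pv.1 pv.2} = ↑F := by
    ext ⟨p, v⟩
    rw [Set.mem_setOf_eq, appears_iff hAB (by norm_num) (fun _ => 8) P p v]
    rw [hFdef, Finset.coe_filter]
    simp only [Set.mem_setOf_eq, Finset.mem_product, Finset.mem_univ, true_and]
    constructor
    · rintro ⟨hd, hall⟩
      refine ⟨(isDir_two_iff v).mp hd, ?_, ?_⟩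
      · have := (hall 0 (by norm_num)).mpr rfl
        simpa using this
      · intro k hk hP
        have := (hall (k : ℕ) k.isLt).mp hP
        omega
    · rintro ⟨hv, hP, hrest⟩
      refine ⟨(isDir_two_iff v).mpr hv, ?_⟩
      intro k hk
      rcases Nat.eq_zero_or_pos k with rfl | hkpos
      · refine iff_of_true ?_ rfl
        simpa using hP
      · exact iff_of_false (hrest ⟨k, hk⟩ hkpos) (by omega)
  unfold conc count
  rw [hset, Set.ncard_coe_finset]
  have hF : F.card = 50 := by
    set_option maxRecDepth 100000 in decide
  rw [hF]
  have hprod : (∏ i : Fin 2, (fun _ : Fin 2 => 8) i) = 64 := by decide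
  rw [hprod]
  norm_num

private lemma exists_N {ℓ : ℕ} (hℓ : 4 ≤ ℓ) (h8 : ℓ ≠ 8) :
    ∃ N : ℕ, ℓ ≤ N ∧ 3 * N < 4 * ℓ ∧ ¬ 2 ∣ N ∧ ¬ 3 ∣ N := by
  rcases (by omega : ℓ % 6 = 0 ∨ ℓ % 6 = 1 ∨ ℓ % 6 = 2 ∨ ℓ % 6 = 3 ∨ ℓ % 6 = 4 ∨ ℓ % 6 = 5)
    with h | h | h | h | h | h
  · exact ⟨ℓ + 1, by omega, by omega, by omega, by omega⟩
  · exact ⟨ℓ, by omega, by omega, by omega, by omega⟩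
  · exact ⟨ℓ + 3, by omega, by omega, by omega, by omega⟩
  · exact ⟨ℓ + 2, by omega, by omega, by omega, by omega⟩
  · exact ⟨ℓ + 1, by omega, by omega, by omega, by omega⟩
  · exact ⟨ℓ, by omega, by omega, by omega, by omega⟩


theorem statement6 (A B : α) (hAB : A ≠ B) (ℓ : ℕ) (hℓ : 4 ≤ ℓ) :
    C 2 (A :: List.replicate (ℓ - 1) B) > 3 * C 1 (A :: List.replicate (ℓ - 1) B) ∧
      3 * C 1 (A :: List.replicate (ℓ - 1) B) = 6 / (ℓ : ℝ) := by
  have hl0 : (0 : ℝ) < (ℓ : ℝ) := by positivity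
  have hC1 : 3 * C 1 (A :: List.replicate (ℓ - 1) B) = 6 / (ℓ : ℝ) := by
    rw [C_one_eq hAB hℓ]
    field_simp
    ring
  refine ⟨?_, hC1⟩
  rw [hC1]
  -- bddAbove of the 2-dimensional concentration set
  have hbdd : BddAbove {x : ℝ | ∃ (n : Fin 2 → ℕ) (Γ : (∀ i, ZMod (n i)) → α),
      (∀ i, 0 < n i) ∧ x = conc n Γ (A :: List.replicate (ℓ - 1) B)} := by
    refine ⟨8, ?_⟩
    rintro x ⟨n, Γ, hn, rfl⟩
    exact conc_two_le _ n hn Γ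
  show C 2 (A :: List.replicate (ℓ - 1) B) > 6 / (ℓ : ℝ)
  rcases eq_or_ne ℓ 8 with rfl | h8
  · obtain ⟨Γ, hΓ⟩ := conc_eight (A := A) (B := B) hAB
    have hmem : (50 / 64 : ℝ) ∈ {x : ℝ | ∃ (n : Fin 2 → ℕ) (Γ : (∀ i, ZMod (n i)) → α),
        (∀ i, 0 < n i) ∧ x = conc n Γ (A :: List.replicate (8 - 1) B)} :=
      ⟨fun _ => 8, Γ, fun i => by norm_num, hΓ.symm⟩
    have hle := le_csSup hbdd hmem
    have : (6 / (8 : ℝ)) < 50 / 64 := by norm_num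
    calc (6 / ((8 : ℕ) : ℝ)) < 50 / 64 := by norm_num
      _ ≤ C 2 (A :: List.replicate (8 - 1) B) := hle
  · obtain ⟨N, hlN, hNl, h2, h3⟩ := exists_N hℓ h8
    obtain ⟨Γ, hΓ⟩ := conc_lattice (A := A) (B := B) hAB hℓ hlN h2 h3
    have hmem : (8 / (N : ℝ)) ∈ {x : ℝ | ∃ (n : Fin 2 → ℕ) (Γ : (∀ i, ZMod (n i)) → α),
        (∀ i, 0 < n i) ∧ x = conc n Γ (A :: List.replicate (ℓ - 1) B)} :=
      ⟨fun _ => N, Γ, fun i => by show 0 < N; omega, hΓ.symm⟩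
    have hle := le_csSup hbdd hmem
    have hN0 : (0 : ℝ) < (N : ℝ) := by
      have : 0 < N := by omega
      exact_mod_cast this
    have hlt : (6 / (ℓ : ℝ)) < 8 / (N : ℝ) := by
      rw [div_lt_div_iff₀ hl0 hN0]
      have : 6 * N < 8 * ℓ := by omega
      exact_mod_cast this
    exact lt_of_lt_of_le hlt hle


end WordGrid
end

section
/- Let n and d be positive integers with gcd(n, (2^d)!) = 1. Then there exists a set S of n^{d−1} points in (ℤ/nℤ)^d that is a configuration of pairwise nonattacking modular queens; that is, for all distinct p, q ∈ S, for every v ∈ {−1,0,1}^d \ {0} (reduced into (ℤ/nℤ)^d coordinatewise) and every integer t, one has q ≠ p + t·v. -/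
open scoped BigOperators

/-!
The configuration is the kernel of the linear form `x ↦ ∑ 2^i x_i` on `(ℤ/nℤ)^d`, which has
`n^(d-1)` elements because the form is onto (the coefficient of `x_0` is `1`). If `p` and
`q = p + t v` both lie in it, then `t s ≡ 0 (mod n)` with `s = ∑ 2^i v_i`. Since `v` has entries
in `{-1, 0, 1}`, `s` is a nonzero integer with `|s| < 2^d`, so `s ∣ (2^d)!` is prime to `n`;
hence `t ≡ 0 (mod n)` and `q = p`.
-/

theorem sum_mul_pow_fin_succ {m : ℕ} (ε : Fin (m + 1) → ℤ) (b : ℤ) :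
    ∑ i, ε i * b ^ (i : ℕ) = ε 0 + b * ∑ i : Fin m, ε i.succ * b ^ (i : ℕ) := by
  simp only [Fin.sum_univ_succ, Fin.val_zero, pow_zero, mul_one, Fin.val_succ, pow_succ',
    Finset.mul_sum, mul_left_comm]

theorem eq_zero_of_sum_mul_pow_eq_zero {b : ℤ} :
    ∀ {m : ℕ} {ε : Fin m → ℤ}, (∀ i, |ε i| < b) → ∑ i, ε i * b ^ (i : ℕ) = 0 → ε = 0
  | 0, ε, _, _ => Subsingleton.elim _ _
  | m + 1, ε, hε, hsum => by
    rw [sum_mul_pow_fin_succ] at hsum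
    have hhead : ε 0 = 0 :=
      Int.eq_zero_of_abs_lt_dvd ⟨-_, by linarith⟩ (hε 0)
    have htail : ∑ i : Fin m, ε i.succ * b ^ (i : ℕ) = 0 := by
      have hb : b ≠ 0 := ((abs_nonneg (ε 0)).trans_lt (hε 0)).ne'
      simpa [hhead, hb] using hsum
    have := eq_zero_of_sum_mul_pow_eq_zero (fun i => hε i.succ) htail
    funext i
    exact Fin.cases hhead (fun j => congrFun this j) i

theorem abs_sum_mul_pow_lt {b : ℤ} :
    ∀ {m : ℕ} {ε : Fin m → ℤ}, (∀ i, |ε i| < b) → |∑ i, ε i * b ^ (i : ℕ)| < b ^ m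
  | 0, ε, _ => by simp
  | m + 1, ε, hε => by
    have ih := abs_sum_mul_pow_lt (fun i => hε i.succ)
    have hb : 0 ≤ b := (abs_nonneg (ε 0)).trans (hε 0).le
    rw [sum_mul_pow_fin_succ, pow_succ']
    calc |ε 0 + b * ∑ i : Fin m, ε i.succ * b ^ (i : ℕ)|
        ≤ |ε 0| + b * |∑ i : Fin m, ε i.succ * b ^ (i : ℕ)| := by
          have := abs_add_le (ε 0) (b * ∑ i : Fin m, ε i.succ * b ^ (i : ℕ))
          rwa [abs_mul, abs_of_nonneg hb] at this
      _ ≤ (b - 1) + b * (b ^ m - 1) := by gcongr <;> linarith [hε 0]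
      _ < b * b ^ m := by linarith

theorem AddMonoidHom.card_ker_mul_card_of_surjective {G H : Type*} [AddGroup G] [AddGroup H]
    (f : G →+ H) (hf : Function.Surjective f) : Nat.card f.ker * Nat.card H = Nat.card G := by
  rw [← f.ker.card_mul_index, AddSubgroup.index_ker, f.range_eq_top.2 hf, AddSubgroup.card_top]

def twoPowForm (R : Type*) [CommRing R] (d : ℕ) : (Fin d → R) →ₗ[R] R :=
  Fintype.linearCombination R fun i => 2 ^ (i : ℕ)

theorem twoPowForm_apply {R : Type*} [CommRing R] {d : ℕ} (x : Fin d → R) :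
    twoPowForm R d x = ∑ i, x i * 2 ^ (i : ℕ) := by
  simp [twoPowForm, Fintype.linearCombination_apply]

theorem twoPowForm_intCast {R : Type*} [CommRing R] {d : ℕ} (v : Fin d → ℤ) :
    twoPowForm R d (fun i => (v i : R)) = ((∑ i, v i * 2 ^ (i : ℕ) : ℤ) : R) := by
  simp [twoPowForm_apply]

theorem twoPowForm_surjective {R : Type*} [CommRing R] {d : ℕ} (hd : 0 < d) :
    Function.Surjective (twoPowForm R d) := fun r =>
  ⟨Pi.single ⟨0, hd⟩ r, by simp [twoPowForm_apply, Pi.single_apply]⟩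

theorem card_ker_twoPowForm {n d : ℕ} (hn : 0 < n) (hd : 0 < d) :
    Nat.card (LinearMap.ker (twoPowForm (ZMod n) d)) = n ^ (d - 1) := by
  have : NeZero n := ⟨hn.ne'⟩
  have h := (twoPowForm (ZMod n) d).toAddMonoidHom.card_ker_mul_card_of_surjective
    (twoPowForm_surjective hd)
  rw [Nat.card_pi, Nat.card_zmod, Finset.prod_const, Finset.card_univ, Fintype.card_fin,
    ← pow_sub_one_mul hd.ne'] at h
  exact Nat.eq_of_mul_eq_mul_right hn h

theorem ZMod.intCast_eq_zero_of_mul_eq_zero {n : ℕ} {s t : ℤ} (hs : IsCoprime (n : ℤ) s)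
    (h : ((t * s : ℤ) : ZMod n) = 0) : (t : ZMod n) = 0 := by
  rw [ZMod.intCast_zmod_eq_zero_iff_dvd] at h ⊢
  exact hs.dvd_of_dvd_mul_right h

namespace WordGrid

theorem IsDir.abs_lt_two {d : ℕ} {v : Fin d → ℤ} (hv : IsDir d v) (i : Fin d) : |v i| < 2 := by
  rcases hv.1 i with h | h | h <;> simp [h]

theorem IsDir.isCoprime_sum_mul_two_pow {n d : ℕ} {v : Fin d → ℤ} (hv : IsDir d v)
    (hcop : n.Coprime (2 ^ d).factorial) : IsCoprime (n : ℤ) (∑ i, v i * 2 ^ (i : ℕ)) := by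
  set s := ∑ i, v i * 2 ^ (i : ℕ)
  have hs : s ≠ 0 := fun h => hv.2 (eq_zero_of_sum_mul_pow_eq_zero hv.abs_lt_two h)
  have hlt : s.natAbs < 2 ^ d := by
    have := abs_sum_mul_pow_lt hv.abs_lt_two
    rw [Int.abs_eq_natAbs] at this
    exact_mod_cast this
  rw [Int.isCoprime_iff_gcd_eq_one]
  exact hcop.coprime_dvd_right (Nat.dvd_factorial (Int.natAbs_pos.2 hs) hlt.le)

theorem statement10 (n d : ℕ) (hn : 0 < n) (hd : 0 < d)
    (hcop : Nat.Coprime n (Nat.factorial (2 ^ d))) :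
    ∃ S : Finset (Fin d → ZMod n), S.card = n ^ (d - 1) ∧
      ∀ p ∈ S, ∀ q ∈ S, p ≠ q →
        ∀ v : Fin d → ℤ, IsDir d v → ∀ t : ℤ,
          q ≠ fun j => p j + ((t * v j : ℤ) : ZMod n) := by
  have : NeZero n := ⟨hn.ne'⟩
  classical
  refine ⟨(LinearMap.ker (twoPowForm (ZMod n) d) : Set _).toFinset, ?_, ?_⟩
  · rw [Set.toFinset_card, ← Nat.card_eq_fintype_card]
    exact card_ker_twoPowForm hn hd
  intro p hp q hq hpq v hv t hqp
  simp only [Set.mem_toFinset, SetLike.mem_coe, LinearMap.mem_ker] at hp hq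
  have hstep : q = p + (t : ZMod n) • fun j => (v j : ZMod n) := by
    rw [hqp]; ext j; simp
  have hweight : ((t * ∑ j, v j * 2 ^ (j : ℕ) : ℤ) : ZMod n) = 0 := by
    rw [hstep, map_add, map_smul, twoPowForm_intCast, hp] at hq
    simpa using hq
  have ht := ZMod.intCast_eq_zero_of_mul_eq_zero (hv.isCoprime_sum_mul_two_pow hcop) hweight
  exact hpq (by rw [hstep, ht, zero_smul, add_zero])

end WordGrid
end

section
/- Let A and B be distinct letters and let w = A B B. For every positive integer d and every grid Γ of shape (ℤ/3ℤ)^d, the concentration of w in Γ satisfies c_d(w, Γ) ≤ 2·3^{d−2}. -/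
open scoped BigOperators

namespace WordGrid

variable {α : Type*}

section AuxWordGrid


variable {d : ℕ}

def phi (t x : Fin d → ZMod 3) : ZMod 3 := ∑ i, t i * x i

lemma zmod3_sum {M : Type*} [AddCommMonoid M] (f : ZMod 3 → M) :
    ∑ j, f j = f 0 + f 1 + f 2 := by
  exact Fin.sum_univ_three f

variable (SB : Finset (Fin d → ZMod 3)) (t : Fin d → ZMod 3)

def beta (j : ZMod 3) : ℕ := (SB.filter fun x => phi t x = j).card

lemma beta_sum : ∑ j : ZMod 3, beta SB t j = SB.card := by
  exact (Finset.card_eq_sum_card_fiberwise (fun x _ => Finset.mem_univ (phi t x))).symm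

def Qt : ℕ := ((SB ×ˢ SB ×ˢ SB).filter fun q =>
    phi t q.1 + phi t q.2.1 + phi t q.2.2 = 0).card

def Rt : ℕ := ((SB ×ˢ SB).filter fun q => phi t q.1 = phi t q.2).card

lemma Rt_eq : Rt SB t = ∑ j : ZMod 3, (beta SB t j)^2 := by
  rw [Rt, Finset.card_eq_sum_card_fiberwise
    (f := fun q => phi t q.1) (t := Finset.univ) (fun x _ => Finset.mem_univ _)]
  apply Finset.sum_congr rfl
  intro j _
  have : ((SB ×ˢ SB).filter fun q => phi t q.1 = phi t q.2).filter
      (fun q => phi t q.1 = j) =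
      (SB.filter fun x => phi t x = j) ×ˢ (SB.filter fun x => phi t x = j) := by
    ext q
    simp only [Finset.mem_filter, Finset.mem_product]
    constructor
    · rintro ⟨⟨⟨h1, h2⟩, h3⟩, h4⟩
      exact ⟨⟨h1, h4⟩, ⟨h2, h3 ▸ h4⟩⟩
    · rintro ⟨⟨h1, h2⟩, ⟨h3, h4⟩⟩
      exact ⟨⟨⟨h1, h3⟩, h2.trans h4.symm⟩, h2⟩
  rw [this, Finset.card_product, sq]
  rfl

lemma Qt_eq : Qt SB t = ∑ j1 : ZMod 3, ∑ j2 : ZMod 3,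
    beta SB t j1 * beta SB t j2 * beta SB t (-j1-j2) := by
  rw [Qt, Finset.card_eq_sum_card_fiberwise
    (f := fun q => (phi t q.1, phi t q.2.1)) (t := Finset.univ) (fun x _ => Finset.mem_univ _)]
  rw [Fintype.sum_prod_type]
  apply Finset.sum_congr rfl; intro j1 _
  apply Finset.sum_congr rfl; intro j2 _
  have : ((SB ×ˢ SB ×ˢ SB).filter fun q =>
        phi t q.1 + phi t q.2.1 + phi t q.2.2 = 0).filter
      (fun q => (phi t q.1, phi t q.2.1) = (j1, j2)) =
      (SB.filter fun x => phi t x = j1) ×ˢ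
      ((SB.filter fun x => phi t x = j2) ×ˢ (SB.filter fun x => phi t x = -j1-j2)) := by
    ext q
    simp only [Finset.mem_filter, Finset.mem_product, Prod.mk.injEq]
    constructor
    · rintro ⟨⟨⟨h1, h2, h3⟩, h4⟩, h5, h6⟩
      refine ⟨⟨h1, h5⟩, ⟨h2, h6⟩, h3, ?_⟩
      rw [h5, h6] at h4
      linear_combination h4
    · rintro ⟨⟨h1, h5⟩, ⟨h2, h6⟩, h3, h7⟩
      refine ⟨⟨⟨h1, h2, h3⟩, ?_⟩, h5, h6⟩
      rw [h5, h6, h7]; ring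
  rw [this, Finset.card_product, Finset.card_product, mul_assoc]
  rfl

lemma Qt_zero : Qt SB 0 = SB.card^3 := by
  have : ∀ x : Fin d → ZMod 3, phi 0 x = 0 := by intro x; simp [phi]
  rw [Qt]
  rw [Finset.filter_true_of_mem (by intro q _; simp [this])]
  simp [Finset.card_product]; ring

lemma Rt_zero : Rt SB 0 = SB.card^2 := by
  have : ∀ x : Fin d → ZMod 3, phi 0 x = 0 := by intro x; simp [phi]
  rw [Rt]
  rw [Finset.filter_true_of_mem (by intro q _; simp [this])]
  simp [Finset.card_product]; ring

lemma schur_aux (x y z : ℤ) (hx : 0 ≤ x) (hy : 0 ≤ y) (hz : 0 ≤ z) :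
    (x+y+z)^3 ≤ 2*(x^3+y^3+z^3+6*x*y*z) + (x+y+z)*(x^2+y^2+z^2) := by
  rcases le_total x y with h1|h1 <;> rcases le_total y z with h2|h2 <;> rcases le_total x z with h3|h3 <;>
  nlinarith [mul_nonneg (sub_nonneg.2 h1) (sub_nonneg.2 h2), mul_nonneg hx (sq_nonneg (x-y)), mul_nonneg hy (sq_nonneg (y-z)), mul_nonneg hz (sq_nonneg (x-z)), mul_nonneg hx (sq_nonneg (x-z)), mul_nonneg hy (sq_nonneg (x-y)), mul_nonneg hz (sq_nonneg (y-z))]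

lemma schur_t : (SB.card:ℤ)^3 ≤ 2*(Qt SB t) + SB.card * Rt SB t := by
  have hb := beta_sum SB t
  have hq := Qt_eq SB t
  have hr := Rt_eq SB t
  rw [zmod3_sum] at hb hr
  rw [zmod3_sum] at hq
  conv at hq => rw [zmod3_sum, zmod3_sum, zmod3_sum]
  set x := beta SB t 0 with hxdef
  set y := beta SB t 1 with hydef
  set z := beta SB t 2 with hzdef
  have e1 : (-(0:ZMod 3)-0) = 0 := by decide
  have e2 : (-(0:ZMod 3)-1) = 2 := by decide
  have e3 : (-(0:ZMod 3)-2) = 1 := by decide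
  have e4 : (-(1:ZMod 3)-0) = 2 := by decide
  have e5 : (-(1:ZMod 3)-1) = 1 := by decide
  have e6 : (-(1:ZMod 3)-2) = 0 := by decide
  have e7 : (-(2:ZMod 3)-0) = 1 := by decide
  have e8 : (-(2:ZMod 3)-1) = 0 := by decide
  have e9 : (-(2:ZMod 3)-2) = 2 := by decide
  rw [e1,e2,e3,e4,e5,e6,e7,e8,e9] at hq
  have hx : (0:ℤ) ≤ x := Int.ofNat_nonneg x
  have hy : (0:ℤ) ≤ y := Int.ofNat_nonneg y
  have hz : (0:ℤ) ≤ z := Int.ofNat_nonneg z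
  have := schur_aux (x:ℤ) y z hx hy hz
  have hq' : (Qt SB t : ℤ) = x^3+y^3+z^3+6*x*y*z := by
    rw [hq]; push_cast; ring
  have hr' : (Rt SB t : ℤ) = x^2+y^2+z^2 := by rw [hr]; push_cast; ring
  have hb' : (SB.card : ℤ) = x+y+z := by rw [← hb]; push_cast; ring
  rw [hq', hr', hb']
  linarith


lemma phi_sub (t x y : Fin d → ZMod 3) : phi t (x - y) = phi t x - phi t y := by
  simp [phi, mul_sub, Finset.sum_sub_distrib]

lemma phi_add (t x y : Fin d → ZMod 3) : phi t (x + y) = phi t x + phi t y := by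
  simp [phi, mul_add, Finset.sum_add_distrib]

def psi (s : Fin d → ZMod 3) : (Fin d → ZMod 3) →+ ZMod 3 where
  toFun := fun t => phi t s
  map_zero' := by simp [phi]
  map_add' := by intro a b; simp [phi, add_mul, Finset.sum_add_distrib]

lemma psi_surj (s : Fin d → ZMod 3) (hs : s ≠ 0) : Function.Surjective (psi s) := by
  obtain ⟨i0, hi0⟩ := Function.ne_iff.mp hs
  intro c
  refine ⟨Pi.single i0 (c * (s i0)⁻¹), ?_⟩
  show phi _ s = c
  rw [phi, Finset.sum_eq_single i0]
  · rw [Pi.single_eq_same, mul_assoc, inv_mul_cancel₀ hi0, mul_one]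
  · intro i _ hne; rw [Pi.single_eq_of_ne hne, zero_mul]
  · intro h; exact absurd (Finset.mem_univ i0) h

lemma card_ker (hd : 0 < d) (s : Fin d → ZMod 3) (hs : s ≠ 0) :
    (Finset.univ.filter fun t : Fin d → ZMod 3 => phi t s = 0).card = 3 ^ (d - 1) := by
  have hcardV : Fintype.card (Fin d → ZMod 3) = 3 ^ d := by
    simp [Fintype.card_fun]
  have h1 : Nat.card (Fin d → ZMod 3) =
      Nat.card ((Fin d → ZMod 3) ⧸ (psi s).ker) * Nat.card (psi s).ker :=
    AddSubgroup.card_eq_card_quotient_mul_card_addSubgroup (psi s).ker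
  have h2 : Nat.card ((Fin d → ZMod 3) ⧸ (psi s).ker) = 3 := by
    rw [Nat.card_congr (QuotientAddGroup.quotientKerEquivOfSurjective (psi s) (psi_surj s hs)).toEquiv]
    simp [Nat.card_eq_fintype_card]
  have h3 : (Finset.univ.filter fun t : Fin d → ZMod 3 => phi t s = 0).card
      = Nat.card (psi s).ker := by
    rw [Nat.card_eq_fintype_card, Fintype.card_subtype]
    congr 1
    apply Finset.filter_congr
    intro t _
    simp [AddMonoidHom.mem_ker, psi]
    exact Iff.rfl
  rw [h3]
  have h4 : Nat.card (Fin d → ZMod 3) = 3 ^ d := by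
    rw [Nat.card_eq_fintype_card]; exact hcardV
  have h5 : (3:ℕ) ^ d = 3 * 3 ^ (d - 1) := by
    conv_lhs => rw [show d = (d-1) + 1 from (Nat.succ_pred_eq_of_pos hd).symm]
    ring
  have := h1
  rw [h4, h2] at this
  omega

lemma card_ker_ite (hd : 0 < d) (s : Fin d → ZMod 3) :
    (Finset.univ.filter fun t : Fin d → ZMod 3 => phi t s = 0).card
      = if s = 0 then 3 * 3 ^ (d-1) else 3 ^ (d - 1) := by
  split_ifs with h
  · subst h
    have : ∀ t : Fin d → ZMod 3, phi t (0 : Fin d → ZMod 3) = 0 := by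
      intro t; simp [phi]
    rw [Finset.filter_true_of_mem (fun x _ => this x)]
    rw [Finset.card_univ, Fintype.card_fun]
    have : (3:ℕ) ^ d = 3 * 3 ^ (d - 1) := by
      conv_lhs => rw [show d = (d-1) + 1 from (Nat.succ_pred_eq_of_pos hd).symm]
      ring
    simpa using this
  · exact card_ker hd s h

def E3 : ℕ := ((SB ×ˢ SB ×ˢ SB).filter fun q => q.1 + q.2.1 + q.2.2 = 0).card

lemma sum_Qt (hd : 0 < d) :
    ∑ t : Fin d → ZMod 3, Qt SB t
      = 3^(d-1) * SB.card^3 + 2 * 3^(d-1) * E3 SB := by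
  have hrw : ∀ t : Fin d → ZMod 3, Qt SB t =
      ∑ q ∈ SB ×ˢ SB ×ˢ SB, if phi t (q.1 + q.2.1 + q.2.2) = 0 then 1 else 0 := by
    intro t
    rw [Qt, Finset.card_filter]
    apply Finset.sum_congr rfl
    intro q _
    congr 1
    simp [phi_add]
  calc ∑ t : Fin d → ZMod 3, Qt SB t
      = ∑ q ∈ SB ×ˢ SB ×ˢ SB, ∑ t : Fin d → ZMod 3,
          (if phi t (q.1 + q.2.1 + q.2.2) = 0 then 1 else 0) := by
        rw [← Finset.sum_comm]
        exact Finset.sum_congr rfl fun t _ => hrw t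
    _ = ∑ q ∈ SB ×ˢ SB ×ˢ SB,
          (if q.1 + q.2.1 + q.2.2 = 0 then 3 * 3^(d-1) else 3^(d-1)) := by
        apply Finset.sum_congr rfl
        intro q _
        rw [← Finset.card_filter]
        exact card_ker_ite hd _
    _ = ∑ q ∈ SB ×ˢ SB ×ˢ SB,
          (3^(d-1) + if q.1 + q.2.1 + q.2.2 = 0 then 2 * 3^(d-1) else 0) := by
        apply Finset.sum_congr rfl
        intro q _
        split_ifs <;> ring
    _ = 3^(d-1) * SB.card^3 + 2 * 3^(d-1) * E3 SB := by
        rw [Finset.sum_add_distrib, Finset.sum_const, ← Finset.sum_filter,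
          Finset.sum_const]
        simp only [smul_eq_mul, Finset.card_product]
        rw [show (E3 SB) = ((SB ×ˢ SB ×ˢ SB).filter fun q => q.1 + q.2.1 + q.2.2 = 0).card from rfl]
        ring

lemma diag_card : ((SB ×ˢ SB).filter fun q => q.1 = q.2).card = SB.card := by
  apply Finset.card_bij (fun q _ => q.1)
  · intro q hq
    simp only [Finset.mem_filter, Finset.mem_product] at hq
    exact hq.1.1
  · intro q1 h1 q2 h2 he
    simp only [Finset.mem_filter, Finset.mem_product] at h1 h2
    have h22 : q1.2 = q2.2 := by rw [← h1.2, ← h2.2]; exact he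
    exact Prod.ext he h22
  · intro x hx
    exact ⟨(x, x), by simp [Finset.mem_filter, Finset.mem_product, hx], rfl⟩

lemma sum_Rt (hd : 0 < d) :
    ∑ t : Fin d → ZMod 3, Rt SB t
      = 3^(d-1) * SB.card^2 + 2 * 3^(d-1) * SB.card := by
  have hrw : ∀ t : Fin d → ZMod 3, Rt SB t =
      ∑ q ∈ SB ×ˢ SB, if phi t (q.1 - q.2) = 0 then 1 else 0 := by
    intro t
    rw [Rt, Finset.card_filter]
    apply Finset.sum_congr rfl
    intro q _
    congr 1
    rw [phi_sub]
    simp [sub_eq_zero]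
  calc ∑ t : Fin d → ZMod 3, Rt SB t
      = ∑ q ∈ SB ×ˢ SB, ∑ t : Fin d → ZMod 3,
          (if phi t (q.1 - q.2) = 0 then 1 else 0) := by
        rw [← Finset.sum_comm]
        exact Finset.sum_congr rfl fun t _ => hrw t
    _ = ∑ q ∈ SB ×ˢ SB, (if q.1 = q.2 then 3 * 3^(d-1) else 3^(d-1)) := by
        apply Finset.sum_congr rfl
        intro q _
        rw [← Finset.card_filter, card_ker_ite hd]
        congr 1
        simp [sub_eq_zero]
    _ = ∑ q ∈ SB ×ˢ SB, (3^(d-1) + if q.1 = q.2 then 2 * 3^(d-1) else 0) := by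
        apply Finset.sum_congr rfl
        intro q _
        split_ifs <;> ring
    _ = 3^(d-1) * SB.card^2 + 2 * 3^(d-1) * SB.card := by
        rw [Finset.sum_add_distrib, Finset.sum_const, ← Finset.sum_filter,
          Finset.sum_const, diag_card]
        simp only [smul_eq_mul, Finset.card_product]
        ring


lemma E3_lower (hd : 0 < d) :
    (SB.card:ℤ)^3 - 3^(d-1) * (SB.card:ℤ)^2 ≤ 2 * 3^(d-1) * (E3 SB : ℤ) := by
  set b : ℤ := (SB.card : ℤ) with hbdef
  have hb0 : (0:ℤ) ≤ b := Int.ofNat_nonneg _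
  set M : ℤ := 3^(d-1) with hMdef
  have hQ : ∑ t : Fin d → ZMod 3, (Qt SB t : ℤ) = M * b^3 + 2 * M * (E3 SB : ℤ) := by
    rw [hbdef, hMdef]
    exact_mod_cast congrArg (fun n : ℕ => (n : ℤ)) (sum_Qt SB hd)
  have hR : ∑ t : Fin d → ZMod 3, (Rt SB t : ℤ) = M * b^2 + 2 * M * b := by
    rw [hbdef, hMdef]
    exact_mod_cast congrArg (fun n : ℕ => (n : ℤ)) (sum_Rt SB hd)
  have hN : (3:ℤ)^d = 3 * M := by
    rw [hMdef]
    conv_lhs => rw [show d = (d-1) + 1 from (Nat.succ_pred_eq_of_pos hd).symm]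
    ring
  -- sum over t ≠ 0
  have h0mem : (0 : Fin d → ZMod 3) ∈ (Finset.univ : Finset (Fin d → ZMod 3)) :=
    Finset.mem_univ _
  have hsplit : (2*(Qt SB 0 : ℤ) + b * (Rt SB 0 : ℤ)) +
      ∑ t ∈ Finset.univ.erase (0 : Fin d → ZMod 3), (2*(Qt SB t : ℤ) + b * (Rt SB t : ℤ))
      = ∑ t : Fin d → ZMod 3, (2*(Qt SB t : ℤ) + b * (Rt SB t : ℤ)) :=
    Finset.add_sum_erase _ (fun t => 2*(Qt SB t : ℤ) + b * (Rt SB t : ℤ)) h0mem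
  have hcard_erase : ((Finset.univ.erase (0 : Fin d → ZMod 3)).card : ℤ) = 3 * M - 1 := by
    rw [Finset.card_erase_of_mem h0mem, Finset.card_univ, Fintype.card_fun]
    have h3d : (3:ℕ)^d = 3 * 3^(d-1) := by
      conv_lhs => rw [show d = (d-1) + 1 from (Nat.succ_pred_eq_of_pos hd).symm]
      ring
    simp only [ZMod.card, Fintype.card_fin]
    rw [h3d]
    have : (1:ℕ) ≤ 3 * 3^(d-1) := Nat.one_le_iff_ne_zero.mpr (by positivity)
    push_cast [Nat.cast_sub this]
    ring
  have hlow : ((Finset.univ.erase (0 : Fin d → ZMod 3)).card : ℤ) * b^3 ≤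
      ∑ t ∈ Finset.univ.erase (0 : Fin d → ZMod 3), (2*(Qt SB t : ℤ) + b * (Rt SB t : ℤ)) := by
    calc ((Finset.univ.erase (0 : Fin d → ZMod 3)).card : ℤ) * b^3
        = ∑ _t ∈ Finset.univ.erase (0 : Fin d → ZMod 3), b^3 := by
          rw [Finset.sum_const, nsmul_eq_mul]
      _ ≤ ∑ t ∈ Finset.univ.erase (0 : Fin d → ZMod 3), (2*(Qt SB t : ℤ) + b * (Rt SB t : ℤ)) :=
          Finset.sum_le_sum (fun t _ => schur_t SB t)
  have hQ0 : (Qt SB 0 : ℤ) = b^3 := by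
    rw [Qt_zero]; push_cast; ring
  have hR0 : (Rt SB 0 : ℤ) = b^2 := by
    rw [Rt_zero]; push_cast; ring
  have hsum_all : ∑ t : Fin d → ZMod 3, (2*(Qt SB t : ℤ) + b * (Rt SB t : ℤ))
      = 2 * (M * b^3 + 2 * M * (E3 SB : ℤ)) + b * (M * b^2 + 2 * M * b) := by
    rw [Finset.sum_add_distrib, ← Finset.mul_sum, ← Finset.mul_sum, hQ, hR]
  rw [hcard_erase] at hlow
  have hE3 : (0:ℤ) ≤ (E3 SB : ℤ) := Int.ofNat_nonneg _
  nlinarith [hlow, hsplit, hsum_all, hQ0, hR0]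

lemma core (hd : 0 < d) (Pf : Finset ((Fin d → ZMod 3) × (Fin d → ZMod 3)))
    (hPf : ∀ pu ∈ Pf, pu.1 ∉ SB ∧ pu.1 + pu.2 ∈ SB ∧ pu.1 + pu.2 + pu.2 ∈ SB) :
    (Pf.card : ℤ) ≤ 2 * 3^(d-1) * 3^(d-1) := by
  classical
  set b : ℤ := (SB.card : ℤ) with hbdef
  set M : ℤ := 3^(d-1) with hMdef
  have hM1 : (1:ℤ) ≤ M := one_le_pow₀ (by norm_num)
  have h3 : ∀ a : ZMod 3, a + a + a = 0 := by decide
  set Dp : Finset ((Fin d → ZMod 3) × (Fin d → ZMod 3)) :=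
    (SB ×ˢ SB).filter (fun q => ¬(-q.1 - q.2 ∈ SB)) with hDp
  -- injection from Pf into Dp
  have hinj : Pf.card ≤ Dp.card := by
    apply Finset.card_le_card_of_injOn (fun pu => (pu.1 + pu.2, pu.1 + pu.2 + pu.2))
    · intro pu hpu
      obtain ⟨h1, h2, h3'⟩ := hPf pu hpu
      rw [Finset.mem_coe, hDp, Finset.mem_filter, Finset.mem_product]
      refine ⟨⟨h2, h3'⟩, ?_⟩
      have key : -(pu.1 + pu.2) - (pu.1 + pu.2 + pu.2) = pu.1 := by
        funext j
        have a3 := h3 (pu.1 j)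
        have b3 := h3 (pu.2 j)
        show -(pu.1 j + pu.2 j) - (pu.1 j + pu.2 j + pu.2 j) = pu.1 j
        linear_combination -a3 - b3
      rw [key]
      exact h1
    · intro a _ c _ h
      simp only [Prod.mk.injEq] at h
      obtain ⟨h1, h2⟩ := h
      have hu : a.2 = c.2 := by
        have e : (a.1 + a.2 + a.2) - (a.1 + a.2) = (c.1 + c.2 + c.2) - (c.1 + c.2) := by
          rw [h2, h1]
        simpa using e
      have hp : a.1 = c.1 := by
        have := h1
        rw [hu] at this
        exact add_right_cancel this
      exact Prod.ext hp hu
  -- Dp.card + E3pair = b^2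
  have hsplit : ((SB ×ˢ SB).filter (fun q => -q.1 - q.2 ∈ SB)).card + Dp.card
      = SB.card * SB.card := by
    rw [hDp, ← Finset.card_product]
    exact Finset.card_filter_add_card_filter_not _
  -- E3pair = E3
  have hE3eq : ((SB ×ˢ SB).filter (fun q => -q.1 - q.2 ∈ SB)).card = E3 SB := by
    rw [E3]
    apply Finset.card_bij (fun q _ => (q.1, (q.2, -q.1 - q.2)))
    · intro q hq
      simp only [Finset.mem_filter, Finset.mem_product] at hq ⊢
      refine ⟨⟨hq.1.1, hq.1.2, hq.2⟩, by ring⟩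
    · intro q1 h1 q2 h2 he
      simp only [Prod.mk.injEq] at he
      exact Prod.ext he.1 he.2.1
    · intro q hq
      simp only [Finset.mem_filter, Finset.mem_product] at hq
      refine ⟨(q.1, q.2.1), ?_, ?_⟩
      · have hz : q.2.2 = -q.1 - q.2.1 := by linear_combination hq.2
        simp only [Finset.mem_filter, Finset.mem_product]
        exact ⟨⟨hq.1.1, hq.1.2.1⟩, by rw [← hz]; exact hq.1.2.2⟩
      · have hz : q.2.2 = -q.1 - q.2.1 := by linear_combination hq.2
        exact Prod.ext rfl (Prod.ext rfl hz.symm)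
  have hPD : (Pf.card : ℤ) ≤ b^2 - (E3 SB : ℤ) := by
    rw [hE3eq] at hsplit
    have hcast : (E3 SB : ℤ) + (Dp.card : ℤ) = b * b := by
      rw [hbdef]; exact_mod_cast hsplit
    have hinj' : (Pf.card : ℤ) ≤ (Dp.card : ℤ) := by exact_mod_cast hinj
    nlinarith [hcast, hinj']
  have hE3low := E3_lower SB hd
  rw [← hbdef, ← hMdef] at hE3low
  have hb0 : (0:ℤ) ≤ b := Int.ofNat_nonneg _
  have key : 2 * M * (Pf.card : ℤ) ≤ 4 * M^3 := by
    nlinarith [mul_nonneg (mul_nonneg (sub_nonneg.2 hb0) (sub_nonneg.2 hb0)) hb0,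
      sq_nonneg (b - 2*M), mul_nonneg (sq_nonneg (b - 2*M)) (by linarith : (0:ℤ) ≤ b + M)]
  nlinarith [key, hM1]

def dec3 (c : ZMod 3) : ℤ := if c = 0 then 0 else if c = 1 then 1 else -1

lemma dec3_cast : ∀ c : ZMod 3, ((dec3 c : ℤ) : ZMod 3) = c := by decide

lemma dec3_entries : ∀ c : ZMod 3, dec3 c = -1 ∨ dec3 c = 0 ∨ dec3 c = 1 := by decide

lemma dec3_zero_iff : ∀ c : ZMod 3, dec3 c = 0 ↔ c = 0 := by decide

lemma dec3_inj : ∀ c c' : ZMod 3, dec3 c = dec3 c' → c = c' := by decide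

variable {d : ℕ} (A B : α) (Γ : (∀ _ : Fin d, ZMod 3) → α)

lemma appears_iff_s11 (p : Fin d → ZMod 3) (v : Fin d → ℤ) :
    Appears (fun _ : Fin d => 3) Γ [A, B, B] p v ↔
      IsDir d v ∧ Γ p = A ∧ Γ (p + fun j => ((v j : ℤ) : ZMod 3)) = B ∧
        Γ ((p + fun j => ((v j : ℤ) : ZMod 3)) + fun j => ((v j : ℤ) : ZMod 3)) = B := by
  constructor
  · rintro ⟨hdir, hk⟩
    refine ⟨hdir, ?_, ?_, ?_⟩
    · have h0 := hk ⟨0, by norm_num⟩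
      have : (fun j => p j + (((((⟨0, by norm_num⟩ : Fin ([A,B,B].length)) : ℤ)) * v j : ℤ) : ZMod 3)) = p := by
        funext j
        show p j + (((0 * v j : ℤ)) : ZMod 3) = p j
        simp
      rw [this] at h0
      exact h0
    · have h1 := hk ⟨1, by norm_num⟩
      have : (fun j => p j + (((((⟨1, by norm_num⟩ : Fin ([A,B,B].length)) : ℤ)) * v j : ℤ) : ZMod 3))
          = (p + fun j => ((v j : ℤ) : ZMod 3)) := by
        funext j
        show p j + (((1 * v j : ℤ)) : ZMod 3) = p j + ((v j : ℤ) : ZMod 3)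
        rw [one_mul]
      rw [this] at h1
      exact h1
    · have h2 := hk ⟨2, by norm_num⟩
      have : (fun j => p j + (((((⟨2, by norm_num⟩ : Fin ([A,B,B].length)) : ℤ)) * v j : ℤ) : ZMod 3))
          = ((p + fun j => ((v j : ℤ) : ZMod 3)) + fun j => ((v j : ℤ) : ZMod 3)) := by
        funext j
        show p j + (((2 * v j : ℤ)) : ZMod 3) = p j + ((v j : ℤ) : ZMod 3) + ((v j : ℤ) : ZMod 3)
        push_cast
        ring
      rw [this] at h2
      exact h2
  · rintro ⟨hdir, h0, h1, h2⟩
    refine ⟨hdir, ?_⟩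
    intro k
    match k with
    | ⟨0, _⟩ =>
      have : (fun j => p j + (((((⟨0, by norm_num⟩ : Fin ([A,B,B].length)) : ℤ)) * v j : ℤ) : ZMod 3)) = p := by
        funext j
        show p j + (((0 * v j : ℤ)) : ZMod 3) = p j
        simp
      show Γ _ = A
      rw [show (fun j => p j + ((((⟨0, by norm_num⟩ : Fin ([A,B,B].length)) : ℤ) * v j : ℤ) : ZMod 3)) = p from this]
      exact h0
    | ⟨1, _⟩ =>
      have heq : (fun j => p j + (((((⟨1, by norm_num⟩ : Fin ([A,B,B].length)) : ℤ)) * v j : ℤ) : ZMod 3))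
          = (p + fun j => ((v j : ℤ) : ZMod 3)) := by
        funext j
        show p j + (((1 * v j : ℤ)) : ZMod 3) = p j + ((v j : ℤ) : ZMod 3)
        rw [one_mul]
      show Γ _ = B
      rw [heq]
      exact h1
    | ⟨2, _⟩ =>
      have heq : (fun j => p j + (((((⟨2, by norm_num⟩ : Fin ([A,B,B].length)) : ℤ)) * v j : ℤ) : ZMod 3))
          = ((p + fun j => ((v j : ℤ) : ZMod 3)) + fun j => ((v j : ℤ) : ZMod 3)) := by
        funext j
        show p j + (((2 * v j : ℤ)) : ZMod 3) = p j + ((v j : ℤ) : ZMod 3) + ((v j : ℤ) : ZMod 3)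
        push_cast
        ring
      show Γ _ = B
      rw [heq]
      exact h2


variable [DecidableEq α]

def Pfin : Finset ((Fin d → ZMod 3) × (Fin d → ZMod 3)) :=
  (Finset.univ ×ˢ Finset.univ).filter fun pu =>
    pu.2 ≠ 0 ∧ Γ pu.1 = A ∧ Γ (pu.1 + pu.2) = B ∧ Γ (pu.1 + pu.2 + pu.2) = B

def iotaMap : (Fin d → ZMod 3) × (Fin d → ZMod 3) → (Fin d → ZMod 3) × (Fin d → ℤ) :=
  fun pu => (pu.1, fun j => dec3 (pu.2 j))

lemma set_eq :
    {pv : (∀ _ : Fin d, ZMod 3) × (Fin d → ℤ) |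
        Appears (fun _ : Fin d => 3) Γ [A, B, B] pv.1 pv.2}
      = ↑((Pfin A B Γ).image iotaMap) := by
  ext pv
  simp only [Set.mem_setOf_eq, Finset.coe_image, Set.mem_image, Finset.mem_coe]
  constructor
  · intro happ
    rw [appears_iff_s11] at happ
    obtain ⟨⟨hent, hvne⟩, h0, h1, h2⟩ := happ
    refine ⟨(pv.1, fun j => ((pv.2 j : ℤ) : ZMod 3)), ?_, ?_⟩
    · rw [Pfin, Finset.mem_filter]
      refine ⟨by simp, ?_, h0, h1, h2⟩
      intro hu0
      apply hvne
      funext j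
      have hthis : ((pv.2 j : ℤ) : ZMod 3) = 0 := by
        have := congrFun hu0 j
        simpa using this
      show pv.2 j = 0
      rcases hent j with h|h|h <;> rw [h] at hthis ⊢ <;>
        first
          | rfl
          | exact absurd hthis (by decide)
    · rw [iotaMap]
      have : (fun j => dec3 ((pv.2 j : ℤ) : ZMod 3)) = pv.2 := by
        funext j
        rcases hent j with h|h|h <;> rw [h] <;> decide
      rw [this]
  · rintro ⟨qu, hqu, rfl⟩
    rw [Pfin, Finset.mem_filter] at hqu
    obtain ⟨-, hu0, h0, h1, h2⟩ := hqu
    rw [iotaMap]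
    rw [appears_iff_s11]
    have hcast : (fun j => ((dec3 (qu.2 j) : ℤ) : ZMod 3)) = qu.2 := by
      funext j; exact dec3_cast _
    refine ⟨⟨fun i => dec3_entries _, ?_⟩, ?_, ?_, ?_⟩
    · intro hz
      apply hu0
      funext j
      show qu.2 j = 0
      have hthis : dec3 (qu.2 j) = 0 := by simpa using congrFun hz j
      exact (dec3_zero_iff _).mp hthis
    · exact h0
    · show Γ (qu.1 + fun j => ((dec3 (qu.2 j) : ℤ) : ZMod 3)) = B
      rw [hcast]; exact h1
    · show Γ ((qu.1 + fun j => ((dec3 (qu.2 j) : ℤ) : ZMod 3)) + fun j => ((dec3 (qu.2 j) : ℤ) : ZMod 3)) = B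
      rw [hcast]; exact h2

lemma count_eq :
    count (fun _ : Fin d => 3) Γ [A, B, B] = (Pfin A B Γ).card := by
  rw [count]
  rw [show {pv : (∀ _ : Fin d, ZMod 3) × (Fin d → ℤ) |
        Appears (fun _ : Fin d => 3) Γ [A, B, B] pv.1 pv.2}
      = ↑((Pfin A B Γ).image iotaMap) from set_eq A B Γ]
  rw [Set.ncard_coe_finset]
  apply Finset.card_image_of_injOn
  intro a _ c _ h
  rw [iotaMap, iotaMap, Prod.mk.injEq] at h
  obtain ⟨h1, h2⟩ := h
  refine Prod.ext h1 ?_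
  funext j
  exact dec3_inj _ _ (congrFun h2 j)


end AuxWordGrid

theorem statement11 (A B : α) (hAB : A ≠ B) (d : ℕ) (hd : 0 < d)
    (Γ : (∀ _ : Fin d, ZMod 3) → α) :
    conc (fun _ : Fin d => 3) Γ [A, B, B] ≤ 2 * (3 : ℝ) ^ ((d : ℤ) - 2) := by
  classical
  set SB : Finset (Fin d → ZMod 3) :=
    Finset.univ.filter (fun x : Fin d → ZMod 3 => Γ x = B) with hSBdef
  have hPf : ∀ pu ∈ Pfin A B Γ,
      pu.1 ∉ SB ∧ pu.1 + pu.2 ∈ SB ∧ pu.1 + pu.2 + pu.2 ∈ SB := by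
    intro pu hpu
    rw [Pfin, Finset.mem_filter] at hpu
    obtain ⟨-, -, h0, h1, h2⟩ := hpu
    refine ⟨?_, ?_, ?_⟩
    · rw [hSBdef, Finset.mem_filter]
      rintro ⟨-, hB⟩
      exact hAB (h0 ▸ hB ▸ rfl)
    · rw [hSBdef, Finset.mem_filter]
      exact ⟨Finset.mem_univ _, h1⟩
    · rw [hSBdef, Finset.mem_filter]
      exact ⟨Finset.mem_univ _, h2⟩
  have hcore := core SB hd (Pfin A B Γ) hPf
  have hcount : (count (fun _ : Fin d => 3) Γ [A, B, B] : ℤ)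
      ≤ 2 * 3 ^ (d - 1) * 3 ^ (d - 1) := by
    rw [count_eq A B Γ]
    exact hcore
  set e : ℕ := d - 1 with hedef
  have hde : d = e + 1 := (Nat.succ_pred_eq_of_pos hd).symm
  have hcountR : (count (fun _ : Fin d => 3) Γ [A, B, B] : ℝ)
      ≤ 2 * 3 ^ e * 3 ^ e := by
    exact_mod_cast hcount
  rw [conc]
  have hprod : (((∏ _i : Fin d, (3:ℕ)) : ℕ) : ℝ) = (3:ℝ) ^ d := by
    rw [Finset.prod_const]
    push_cast
    simp
  rw [hprod]
  rw [div_le_iff₀ (by positivity : (0:ℝ) < (3:ℝ) ^ d)]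
  have hkey : 2 * (3:ℝ) ^ ((d:ℤ) - 2) * (3:ℝ) ^ d = 2 * 3 ^ e * 3 ^ e := by
    rw [mul_assoc, ← zpow_natCast (3:ℝ) d,
      ← zpow_add₀ (by norm_num : (3:ℝ) ≠ 0)]
    have h2e : (d:ℤ) - 2 + d = 2 * e := by omega
    rw [h2e, show (2 * (e:ℤ)) = ((2 * e : ℕ) : ℤ) by push_cast; ring, zpow_natCast,
      show (2*e) = e + e from two_mul e, pow_add]
    ring
  rw [hkey]
  exact hcountR

end WordGrid
end

section
/- Let n be a positive integer, let S, T ⊆ ℤ/nℤ, and let a, b, c be positive integers such that the difference set S − S contains no residue of an integer in {1, …, a−1}, the difference set T − T contains no residue of an integer in {1, …, a−1}, and the difference set S − T contains no residue of an integer in {−(c−1), …, b−1}. Then |S| + |T| ≤ max( n/a , 2n/(b+c) ). -/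
open scoped BigOperators

/-!
Double every residue, so that `S` and `T` live in `ℤ/2nℤ`, and attach to each point of `S` the
`L` consecutive residues starting at `2s`, and to each point of `T` the `L` consecutive residues
starting at `2t + 2b - L`, where `L = min (2a) (b + c)`. The three gap conditions say exactly
that these `|S| + |T|` blocks are pairwise disjoint, so `(|S| + |T|) L ≤ 2n`.
-/

section Packing

variable {n : ℕ} [NeZero n]

def ZMod.doubleCast (x : ZMod n) : ZMod (2 * n) := ((2 * x.val : ℕ) : ZMod (2 * n))

theorem ZMod.exists_sub_eq_of_doubleCast_sub_eq {x y : ZMod n} {j : ℤ}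
    (h : x.doubleCast - y.doubleCast = (j : ZMod (2 * n))) :
    ∃ k : ℤ, j = 2 * k ∧ x - y = (k : ZMod n) := by
  have h' : (((2 * x.val - 2 * y.val : ℤ)) : ZMod (2 * n)) = j := by
    rw [← h, ZMod.doubleCast, ZMod.doubleCast]; push_cast; ring
  obtain ⟨q, hq⟩ := (ZMod.intCast_eq_intCast_iff_dvd_sub _ _ _).mp h'
  refine ⟨x.val - y.val + n * q, by push_cast at hq; linarith, ?_⟩
  push_cast
  rw [ZMod.natCast_zmod_val, ZMod.natCast_zmod_val, ZMod.natCast_self, zero_mul, add_zero]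

variable {S T : Finset (ZMod n)} {a b c L : ℕ}

theorem eq_of_doubleCast_add_eq_doubleCast_add
    (hS : ∀ s ∈ S, ∀ s' ∈ S, ∀ k : ℤ, 1 ≤ k → k ≤ (a : ℤ) - 1 → s - s' ≠ (k : ZMod n))
    (hL : L ≤ 2 * a) {s s' : ZMod n} (hs : s ∈ S) (hs' : s' ∈ S) {i j : ℕ} (hi : i < L)
    (hj : j < L) (h : s.doubleCast + (i : ZMod (2 * n)) = s'.doubleCast + (j : ZMod (2 * n))) :
    s = s' ∧ i = j := by
  obtain ⟨k, hjik, hk⟩ := ZMod.exists_sub_eq_of_doubleCast_sub_eq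
    (x := s) (y := s') (j := j - i) (by push_cast; linear_combination h)
  rcases lt_trichotomy k 0 with hneg | rfl | hpos
  · refine absurd ?_ (hS s' hs' s hs (-k) (by omega) (by omega))
    rw [Int.cast_neg, ← hk, neg_sub]
  · exact ⟨sub_eq_zero.mp (by simpa using hk), by omega⟩
  · exact absurd hk (hS s hs s' hs' k (by omega) (by omega))

theorem doubleCast_add_ne_doubleCast_add
    (hST : ∀ s ∈ S, ∀ t ∈ T, ∀ k : ℤ, -((c : ℤ) - 1) ≤ k → k ≤ (b : ℤ) - 1 →
      s - t ≠ (k : ZMod n))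
    (hL : L ≤ b + c) {s t : ZMod n} (hs : s ∈ S) (ht : t ∈ T) {i j : ℕ} (hi : i < L)
    (hj : j < L) :
    s.doubleCast + (i : ZMod (2 * n)) ≠ t.doubleCast + ((2 * b - L + j : ℤ) : ZMod (2 * n)) := by
  intro h
  obtain ⟨k, hk2, hk⟩ := ZMod.exists_sub_eq_of_doubleCast_sub_eq
    (x := s) (y := t) (j := 2 * b - L + j - i) (by push_cast at h ⊢; linear_combination h)
  exact hST s hs t ht k (by omega) (by omega) hk

theorem card_add_card_mul_le
    (hS : ∀ s ∈ S, ∀ s' ∈ S, ∀ k : ℤ, 1 ≤ k → k ≤ (a : ℤ) - 1 → s - s' ≠ (k : ZMod n))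
    (hT : ∀ t ∈ T, ∀ t' ∈ T, ∀ k : ℤ, 1 ≤ k → k ≤ (a : ℤ) - 1 → t - t' ≠ (k : ZMod n))
    (hST : ∀ s ∈ S, ∀ t ∈ T, ∀ k : ℤ, -((c : ℤ) - 1) ≤ k → k ≤ (b : ℤ) - 1 →
      s - t ≠ (k : ZMod n))
    (hLa : L ≤ 2 * a) (hLbc : L ≤ b + c) :
    (S.card + T.card) * L ≤ 2 * n := by
  let block : (S ⊕ T) × Fin L → ZMod (2 * n)
    | (.inl s, i) => (s : ZMod n).doubleCast + ((i : ℕ) : ZMod (2 * n))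
    | (.inr t, i) => (t : ZMod n).doubleCast + ((2 * b - L + (i : ℕ) : ℤ) : ZMod (2 * n))
  have hblock : Function.Injective block := by
    rintro ⟨s | t, i⟩ ⟨s' | t', j⟩ h
    · obtain ⟨hss', hij⟩ := eq_of_doubleCast_add_eq_doubleCast_add hS hLa s.2 s'.2 i.2 j.2 h
      rw [Subtype.ext hss', Fin.ext hij]
    · exact absurd h (doubleCast_add_ne_doubleCast_add hST hLbc s.2 t'.2 i.2 j.2)
    · exact absurd h.symm (doubleCast_add_ne_doubleCast_add hST hLbc s'.2 t.2 j.2 i.2)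
    · have h' : (t : ZMod n).doubleCast + (i : ℕ) = (t' : ZMod n).doubleCast + (j : ℕ) := by
        simp only [block] at h; push_cast at h; linear_combination h
      obtain ⟨htt', hij⟩ := eq_of_doubleCast_add_eq_doubleCast_add hT hLa t.2 t'.2 i.2 j.2 h'
      rw [Subtype.ext htt', Fin.ext hij]
  simpa using Fintype.card_le_of_injective block hblock

end Packing

namespace WordGrid

theorem statement12_general (n : ℕ) (hn : 0 < n) (S T : Finset (ZMod n))
    (a b c : ℕ) (ha : 0 < a) (hb : 0 < b)
    (hS : ∀ s ∈ S, ∀ s' ∈ S, ∀ k : ℤ, 1 ≤ k → k ≤ (a : ℤ) - 1 →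
      s - s' ≠ (k : ZMod n))
    (hT : ∀ t ∈ T, ∀ t' ∈ T, ∀ k : ℤ, 1 ≤ k → k ≤ (a : ℤ) - 1 →
      t - t' ≠ (k : ZMod n))
    (hST : ∀ s ∈ S, ∀ t ∈ T, ∀ k : ℤ, -((c : ℤ) - 1) ≤ k → k ≤ (b : ℤ) - 1 →
      s - t ≠ (k : ZMod n)) :
    (S.card : ℝ) + (T.card : ℝ) ≤ max ((n : ℝ) / (a : ℝ)) (2 * (n : ℝ) / ((b : ℝ) + (c : ℝ))) := by
  have : NeZero n := ⟨hn.ne'⟩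
  rcases le_total (2 * a) (b + c) with h2a | hbc
  · have hpack := card_add_card_mul_le hS hT hST le_rfl h2a
    refine le_max_of_le_left ((le_div_iff₀ (by positivity)).mpr ?_)
    exact_mod_cast (by linarith : (S.card + T.card) * a ≤ n)
  · have hpack := card_add_card_mul_le hS hT hST hbc le_rfl
    refine le_max_of_le_right ((le_div_iff₀ (by positivity)).mpr ?_)
    exact_mod_cast hpack

theorem statement12 (n : ℕ) (hn : 0 < n) (S T : Finset (ZMod n))
    (a b c : ℕ) (ha : 0 < a) (hb : 0 < b) (hc : 0 < c)
    (hS : ∀ s ∈ S, ∀ s' ∈ S, ∀ k : ℤ, 1 ≤ k → k ≤ (a : ℤ) - 1 →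
      s - s' ≠ (k : ZMod n))
    (hT : ∀ t ∈ T, ∀ t' ∈ T, ∀ k : ℤ, 1 ≤ k → k ≤ (a : ℤ) - 1 →
      t - t' ≠ (k : ZMod n))
    (hST : ∀ s ∈ S, ∀ t ∈ T, ∀ k : ℤ, -((c : ℤ) - 1) ≤ k → k ≤ (b : ℤ) - 1 →
      s - t ≠ (k : ZMod n)) :
    (S.card : ℝ) + (T.card : ℝ) ≤ max ((n : ℝ) / (a : ℝ)) (2 * (n : ℝ) / ((b : ℝ) + (c : ℝ))) :=
  statement12_general n hn S T a b c ha hb hS hT hST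

end WordGrid
end
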